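/- arXiv:2211.11091 — 7 statements merged into one kernel-verified Lean document; each statement's English description precedes it below -/
import Mathlib

section
/- Let G ≤ S_n be a permutation group acting naturally on V = k^n, where k is a field with char(k) = 0 or char(k) > n. Then the top degree of the vector coinvariants k[V^m]_G is at most binom(n,2), i.e., the graded quotient k[V^m]/I(G,V^m) vanishes in all degrees strictly greater than n(n-1)/2. -/
/-!
Polarize: put `z_i = ∑_j x_{ij} t_j` in `k[x][t]`. The `t`-coefficients of the elementary
symmetric polynomials `e_d(z_0, …, z_{n-1})`, `d ≥ 1`, are `Sₙ`-invariant of positive degree,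
so they lie in the Hilbert ideal of every `G ≤ Sₙ`. The identity
`∑_{i+j=d} (-1)^i e_i(z_0, …, z_{n-1}) h_j(z_l, …, z_{n-1}) = (-1)^d e_d(z_0, …, z_{l-1})`
puts `h_{l+1}(z_l, …, z_{n-1})` in the ideal generated by the `e_i`, since `e_{l+1}` of `l`
variables vanishes. Its `t^γ`-coefficient, `|γ| = l + 1`, is `multinomial(γ) · x_l^γ` plus
monomials of degree `l + 1` in the rows `≥ l` that involve some row `> l`. The multinomial
coefficient divides `(l+1)!`, a unit in `k`, so modulo the Hilbert ideal a monomial with more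
than `l` variables from row `l` is a combination of monomials whose vector of row degrees is
lexicographically smaller. By pigeonhole, every monomial of degree `> binom(n, 2)` has such a
row, and the lexicographic order is well founded.
-/

open MvPolynomial Finset

namespace Multiset

variable {A B : Type*} [CommRing A] [CommRing B]

theorem esymm_zero (s : Multiset A) : s.esymm 0 = 1 := by
  simp [esymm, powersetCard_zero_left]

theorem esymm_cons_succ (a : A) (s : Multiset A) (d : ℕ) :
    (a ::ₘ s).esymm (d + 1) = s.esymm (d + 1) + a * s.esymm d := by
  simp [esymm, powersetCard_cons, sum_map_mul_left]

theorem esymm_eq_zero_of_card_lt {s : Multiset A} {d : ℕ} (h : card s < d) : s.esymm d = 0 := by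
  simp [esymm, powersetCard_eq_empty d h]

theorem map_esymm (f : A →+* B) (s : Multiset A) (d : ℕ) : f (s.esymm d) = (s.map f).esymm d := by
  simp [esymm, map_multiset_sum, map_multiset_prod, powersetCard_map]

theorem esymm_succ_eq_zero_of_forall_eq_zero {s : Multiset A} (h : ∀ a ∈ s, a = 0) (d : ℕ) :
    s.esymm (d + 1) = 0 := by
  induction s using Multiset.induction_on generalizing d with
  | empty => exact esymm_eq_zero_of_card_lt (by simp)
  | cons a s ih =>
    rw [esymm_cons_succ, ih (fun b hb => h b (mem_cons_of_mem hb)), h a (mem_cons_self a s),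
      zero_mul, add_zero]

end Multiset

namespace List

variable {A : Type*} [CommRing A]

def hsymm : List A → ℕ → A
  | [], d => if d = 0 then 1 else 0
  | a :: L, d => ∑ p ∈ antidiagonal d, a ^ p.1 * L.hsymm p.2

@[simp] theorem hsymm_nil (d : ℕ) : ([] : List A).hsymm d = if d = 0 then 1 else 0 := rfl

theorem hsymm_cons (a : A) (L : List A) (d : ℕ) :
    (a :: L).hsymm d = ∑ p ∈ antidiagonal d, a ^ p.1 * L.hsymm p.2 := rfl

@[simp] theorem hsymm_zero (L : List A) : L.hsymm 0 = 1 := by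
  induction L with
  | nil => rfl
  | cons a L ih => simp [hsymm_cons, ih]

theorem hsymm_cons_succ (a : A) (L : List A) (d : ℕ) :
    (a :: L).hsymm (d + 1) = L.hsymm (d + 1) + a * (a :: L).hsymm d := by
  simp only [hsymm_cons, Nat.sum_antidiagonal_succ, pow_zero, one_mul, mul_sum, pow_succ]
  congr 1
  exact sum_congr rfl fun p _ => by ring

theorem sum_antidiagonal_esymm_mul_hsymm (C : Multiset A) (B : List A) (d : ℕ) :
    ∑ p ∈ antidiagonal d, (-1) ^ p.1 * (C + B).esymm p.1 * B.hsymm p.2 = (-1) ^ d * C.esymm d := by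
  induction B generalizing C d with
  | nil => cases d <;> simp [Nat.sum_antidiagonal_succ']
  | cons b B ihB =>
    have hCB : C + ↑(b :: B) = (b ::ₘ C) + B := by
      rw [← Multiset.cons_coe, Multiset.add_cons, Multiset.cons_add]
    induction d with
    | zero => simp [Multiset.esymm_zero]
    | succ d ihd =>
      rw [hCB] at ihd ⊢
      have h := ihB (b ::ₘ C) (d + 1)
      rw [Nat.sum_antidiagonal_succ'] at h ⊢
      simp only [hsymm_cons_succ, mul_add, sum_add_distrib, hsymm_zero] at h ⊢
      rw [Multiset.esymm_cons_succ] at h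
      have hb : ∑ p ∈ antidiagonal d,
          (-1) ^ p.1 * ((b ::ₘ C) + B).esymm p.1 * (b * (b :: B).hsymm p.2) =
            b * ((-1) ^ d * C.esymm d) := by
        rw [← ihd, mul_sum]; exact sum_congr rfl fun p _ => by ring
      linear_combination h + hb

theorem hsymm_mem_span_esymm (C : Multiset A) (B : List A) {d : ℕ} (h : Multiset.card C < d) :
    B.hsymm d ∈ Ideal.span (Set.range fun j => (C + B).esymm (j + 1)) := by
  obtain ⟨d, rfl⟩ : ∃ d', d = d' + 1 := Nat.exists_eq_succ_of_ne_zero (by omega)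
  have key := sum_antidiagonal_esymm_mul_hsymm C B (d + 1)
  rw [Multiset.esymm_eq_zero_of_card_lt h, mul_zero, Nat.sum_antidiagonal_succ] at key
  simp only [pow_zero, Multiset.esymm_zero, one_mul] at key
  rw [eq_neg_of_add_eq_zero_left key]
  refine neg_mem (Ideal.sum_mem _ fun p _ => ?_)
  rw [mul_right_comm]
  exact Ideal.mul_mem_left _ _ (Ideal.subset_span ⟨p.1, rfl⟩)

theorem hsymm_mem_subsemiring {T : Subsemiring A} {L : List A} (h : ∀ a ∈ L, a ∈ T) (d : ℕ) :
    L.hsymm d ∈ T := by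
  induction L generalizing d with
  | nil => rw [hsymm_nil]; split_ifs <;> simp [T.one_mem, T.zero_mem]
  | cons a L ih =>
    exact T.sum_mem fun p _ => T.mul_mem (T.pow_mem (h a (mem_cons_self ..)) _)
      (ih (fun b hb => h b (mem_cons_of_mem a hb)) _)

theorem hsymm_succ_mem {E : Ideal A} {L : List A} (h : ∀ a ∈ L, a ∈ E) (d : ℕ) :
    L.hsymm (d + 1) ∈ E := by
  induction L with
  | nil => simp
  | cons a L ih =>
    rw [hsymm_cons_succ]
    exact E.add_mem (ih fun b hb => h b (mem_cons_of_mem a hb))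
      (E.mul_mem_right _ (h a (mem_cons_self ..)))

theorem hsymm_cons_sub_pow_mem {E : Ideal A} (a : A) {L : List A} (h : ∀ b ∈ L, b ∈ E) (d : ℕ) :
    (a :: L).hsymm d - a ^ d ∈ E := by
  cases d with
  | zero => simp
  | succ d =>
    rw [hsymm_cons, Nat.sum_antidiagonal_succ', hsymm_zero, mul_one, add_sub_cancel_left]
    exact E.sum_mem fun p _ => E.mul_mem_left _ (hsymm_succ_mem h _)

end List

theorem Finsupp.multinomial_cast_ne_zero {k : Type*} [CommRing k] [IsDomain k] {n : ℕ}
    (hchar : ringChar k = 0 ∨ n < ringChar k) {α : Type*} {γ : α →₀ ℕ} (h : γ.degree ≤ n) :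
    (γ.multinomial : k) ≠ 0 := by
  have hdvd : γ.multinomial ∣ Nat.factorial γ.degree :=
    Dvd.intro_left _ (Nat.multinomial_spec γ.support γ)
  rcases hchar with h0 | hlt
  · have : CharP k 0 := h0 ▸ ringChar.charP k
    have : CharZero k := CharP.charP_to_charZero k
    exact Nat.cast_ne_zero.2 (Nat.multinomial_pos _ _).ne'
  · intro hz
    have hp : (ringChar k).Prime :=
      (CharP.char_is_prime_or_zero k (ringChar k)).resolve_right (by omega)
    have := hp.dvd_factorial.1 (((ringChar.spec k _).1 hz).trans hdvd)
    omega

theorem MvPolynomial.monomial_mem_of_monomial_add_mem {K σ : Type*} [Field K]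
    {J : Ideal (MvPolynomial σ K)} {e μ : σ →₀ ℕ} (he : e ≤ μ) {a : K} (ha : a ≠ 0)
    {Q : MvPolynomial σ K} (hQ : monomial e a + Q ∈ J)
    (hlower : ∀ ρ ∈ Q.support, ∀ b, monomial (μ - e + ρ) b ∈ J) (c : K) : monomial μ c ∈ J := by
  have hsplit : monomial μ c = monomial (μ - e) (c / a) * (monomial e a + Q) -
      ∑ ρ ∈ Q.support, monomial (μ - e + ρ) (c / a * coeff ρ Q) := by
    rw [mul_add, monomial_mul, tsub_add_cancel_of_le he, div_mul_cancel₀ c ha, add_sub_assoc,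
      left_eq_add, sub_eq_zero]
    conv_lhs => rw [Q.as_sum]
    rw [mul_sum]
    exact sum_congr rfl fun ρ _ => monomial_mul
  rw [hsplit]
  exact J.sub_mem (J.mul_mem_left _ hQ) (J.sum_mem fun ρ hρ => hlower ρ hρ _)

section HomogeneousCoeffs

variable (k : Type*) [CommRing k] {σ : Type*} (κ : Type*)

def homogeneousCoeffsIn (s : Set σ) : Subsemiring (MvPolynomial κ (MvPolynomial σ k)) where
  carrier := {F | ∀ δ, coeff δ F ∈ supported k s ∧ (coeff δ F).IsHomogeneous δ.degree}
  zero_mem' δ := by simp [isHomogeneous_zero]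
  one_mem' δ := by
    classical
    rw [coeff_one]
    split_ifs with h
    · exact ⟨Subalgebra.one_mem _, h ▸ isHomogeneous_one σ k⟩
    · simp [isHomogeneous_zero]
  add_mem' hF hG δ := by
    rw [coeff_add]
    exact ⟨add_mem (hF δ).1 (hG δ).1, (hF δ).2.add (hG δ).2⟩
  mul_mem' {F G} hF hG δ := by
    classical
    rw [coeff_mul]
    refine ⟨sum_mem fun p _ => mul_mem (hF p.1).1 (hG p.2).1,
      IsHomogeneous.sum _ _ _ fun p hp => ?_⟩
    rw [← mem_antidiagonal.1 hp, map_add]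
    exact (hF p.1).2.mul (hG p.2).2

variable {k κ}

theorem monomial_single_X_mem_homogeneousCoeffsIn {s : Set σ} {v : σ} (hv : v ∈ s) (j : κ) :
    monomial (Finsupp.single j 1) (X v) ∈ homogeneousCoeffsIn k κ s := by
  classical
  intro δ
  rw [coeff_monomial]
  split_ifs with h
  · subst h
    exact ⟨Algebra.subset_adjoin (Set.mem_image_of_mem X hv), by simpa using isHomogeneous_X k v⟩
  · simp [isHomogeneous_zero]

end HomogeneousCoeffs

section RowDegrees

variable {α β : Type*}

noncomputable def rowDegrees (μ : α × β →₀ ℕ) : α →₀ ℕ := μ.mapDomain Prod.fst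

theorem rowDegrees_add (μ ν : α × β →₀ ℕ) : rowDegrees (μ + ν) = rowDegrees μ + rowDegrees ν :=
  Finsupp.mapDomain_add

theorem degree_rowDegrees (μ : α × β →₀ ℕ) : (rowDegrees μ).degree = μ.degree :=
  Finsupp.degree_mapDomain _ _

theorem rowDegrees_mapDomain_mk (l : α) (γ : β →₀ ℕ) :
    rowDegrees (γ.mapDomain (Prod.mk l)) = Finsupp.single l γ.degree := by
  rw [rowDegrees, ← Finsupp.mapDomain_comp, Finsupp.mapDomain, Finsupp.degree_apply]
  exact (Finsupp.single_finsetSum _ _ _).symm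

theorem rowDegrees_apply [Fintype α] [Fintype β] (μ : α × β →₀ ℕ) (i : α) :
    rowDegrees μ i = ∑ j, μ (i, j) := by
  classical
  rw [rowDegrees, Finsupp.mapDomain, Finsupp.sum_apply, Finsupp.sum_fintype _ _ (by simp),
    Fintype.sum_prod_type]
  simp [Finsupp.single_apply]

theorem degree_curry_apply [Fintype α] [Fintype β] (μ : α × β →₀ ℕ) (i : α) :
    (μ.curry i).degree = rowDegrees μ i := by
  rw [rowDegrees_apply, Finsupp.degree_eq_sum]
  rfl

theorem mapDomain_mk_le_of_le_curry {μ : α × β →₀ ℕ} {l : α} {γ : β →₀ ℕ} (h : γ ≤ μ.curry l) :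
    γ.mapDomain (Prod.mk l) ≤ μ := by
  rintro ⟨i, j⟩
  by_cases hi : i = l
  · subst hi
    rw [Finsupp.mapDomain_apply (Prod.mk_right_injective i)]
    exact h j
  · rw [Finsupp.mapDomain_of_notMem_range]
    · exact Nat.zero_le _
    · rintro ⟨j', hj'⟩
      exact hi (congrArg Prod.fst hj').symm

theorem toLex_rowDegrees_lt_single [LinearOrder α] [Fintype α] [Fintype β] {ρ : α × β →₀ ℕ}
    {l : α} (hrows : ∀ v ∈ ρ.support, l ≤ v.1) {v : α × β} (hv : v ∈ ρ.support) (hlv : l < v.1) :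
    toLex (rowDegrees ρ) < toLex (Finsupp.single l ρ.degree) := by
  classical
  rw [Finsupp.Lex.lt_iff]
  refine ⟨l, fun i hi => ?_, ?_⟩
  · rw [ofLex_toLex, ofLex_toLex, Finsupp.single_eq_of_ne hi.ne, rowDegrees_apply]
    refine sum_eq_zero fun j _ => ?_
    by_contra hj
    exact (hrows (i, j) (Finsupp.mem_support_iff.2 hj)).not_gt hi
  · have hvrow : 0 < rowDegrees ρ v.1 := by
      rw [rowDegrees_apply]
      exact (Nat.pos_of_ne_zero (Finsupp.mem_support_iff.1 hv)).trans_le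
        (single_le_sum (f := fun j => ρ (v.1, j)) (fun _ _ => Nat.zero_le _) (mem_univ v.2))
    have hpair : rowDegrees ρ l + rowDegrees ρ v.1 ≤ ρ.degree := by
      rw [← degree_rowDegrees, Finsupp.degree_eq_sum, ← sum_pair hlv.ne]
      exact sum_le_sum_of_subset (subset_univ _)
    rw [ofLex_toLex, ofLex_toLex, Finsupp.single_eq_same]
    omega

theorem exists_lt_rowDegrees {n : ℕ} [Fintype β] {μ : Fin n × β →₀ ℕ}
    (h : n.choose 2 < μ.degree) : ∃ l : Fin n, (l : ℕ) < rowDegrees μ l := by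
  by_contra! hle
  have hsum : μ.degree ≤ ∑ i : Fin n, (i : ℕ) := by
    rw [← degree_rowDegrees, Finsupp.degree_eq_sum]
    exact sum_le_sum fun i _ => hle i
  rw [Fin.sum_univ_eq_sum_range (fun i => i) n, sum_range_id, ← Nat.choose_two_right] at hsum
  omega

end RowDegrees

section Polarization

variable (k : Type*) [CommRing k] {n : ℕ} (κ : Type*) [Fintype κ]

/-- `z_i = ∑_j x_{ij} t_j`, where the `t_j` are the variables of the outer polynomial ring. -/
noncomputable def polarization (i : Fin n) : MvPolynomial κ (MvPolynomial (Fin n × κ) k) :=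
  ∑ j, (X (i, j) : MvPolynomial (Fin n × κ) k) • X j

variable (n) in
noncomputable def polarizedEsymm (d : ℕ) : MvPolynomial κ (MvPolynomial (Fin n × κ) k) :=
  (univ.val.map (polarization k κ)).esymm d

variable (n) in
noncomputable def polarizedEsymmIdeal : Ideal (MvPolynomial (Fin n × κ) k) :=
  Ideal.span (Set.range fun p : (κ →₀ ℕ) × ℕ => coeff p.1 (polarizedEsymm k n κ (p.2 + 1)))

variable {k κ}

theorem map_rename_polarization (g : Equiv.Perm (Fin n)) (i : Fin n) :
    MvPolynomial.map (rename (R := k) fun p : Fin n × κ => (g⁻¹ p.1, p.2) : _ →+* _)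
      (polarization k κ i) = polarization k κ (g⁻¹ i) := by
  simp [polarization, smul_eq_C_mul]

theorem rename_coeff_polarizedEsymm (g : Equiv.Perm (Fin n)) (δ : κ →₀ ℕ) (d : ℕ) :
    rename (fun p : Fin n × κ => (g⁻¹ p.1, p.2)) (coeff δ (polarizedEsymm k n κ d)) =
      coeff δ (polarizedEsymm k n κ d) := by
  rw [← AlgHom.coe_toRingHom, ← coeff_map, polarizedEsymm, Multiset.map_esymm, Multiset.map_map]
  conv_rhs => rw [← Multiset.map_univ_val_equiv g⁻¹, Multiset.map_map]
  congr 2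
  exact Multiset.map_congr rfl fun i _ => map_rename_polarization g i

theorem constantCoeff_coeff_polarizedEsymm_succ (δ : κ →₀ ℕ) (d : ℕ) :
    constantCoeff (coeff δ (polarizedEsymm k n κ (d + 1))) = 0 := by
  rw [← coeff_map, polarizedEsymm, Multiset.map_esymm,
    Multiset.esymm_succ_eq_zero_of_forall_eq_zero, coeff_zero]
  simp [polarization, smul_eq_C_mul]

theorem polarizedEsymmIdeal_le_span_invariants (G : Subgroup (Equiv.Perm (Fin n))) :
    polarizedEsymmIdeal k n κ ≤ Ideal.span {h : MvPolynomial (Fin n × κ) k |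
      (∀ g ∈ G, rename (fun p : Fin n × κ => (g⁻¹ p.1, p.2)) h = h) ∧ constantCoeff h = 0} := by
  refine Ideal.span_mono ?_
  rintro _ ⟨⟨δ, d⟩, rfl⟩
  exact ⟨fun g _ => rename_coeff_polarizedEsymm g δ _, constantCoeff_coeff_polarizedEsymm_succ δ d⟩

theorem polarizedEsymm_succ_mem_map_C (d : ℕ) :
    polarizedEsymm k n κ (d + 1) ∈ (polarizedEsymmIdeal k n κ).map C :=
  mem_map_C_iff.2 fun δ => Ideal.subset_span ⟨(δ, d), rfl⟩

end Polarization

section RowSplit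

variable {k : Type*} [CommRing k] {n : ℕ} {κ : Type*} [Fintype κ]

theorem polarization_mem_homogeneousCoeffsIn {l i : Fin n} (h : l ≤ i) :
    polarization k κ i ∈ homogeneousCoeffsIn k κ {v : Fin n × κ | l ≤ v.1} :=
  sum_mem fun j _ => by
    rw [smul_eq_C_mul, C_mul_X_eq_monomial]
    exact monomial_single_X_mem_homogeneousCoeffsIn (v := (i, j)) h j

variable (k κ) in
/-- The list `z_l, z_{l+1}, …, z_{n-1}` with `z_l` first, so that `List.hsymm_cons_sub_pow_mem`
isolates its pure power. -/
noncomputable def polarizationsFrom (l : Fin n) :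
    List (MvPolynomial κ (MvPolynomial (Fin n × κ) k)) :=
  polarization k κ l :: (Ioi l).toList.map (polarization k κ)

theorem univ_val_eq_Iio_add_cons_Ioi (l : Fin n) :
    (univ : Finset (Fin n)).val = (Iio l).val + l ::ₘ (Ioi l).val := by
  have hdisj : Disjoint (Iio l) (Ici l) := disjoint_left.2 fun a ha hb => by
    simp only [mem_Iio, mem_Ici] at ha hb; omega
  have h : (Iio l).disjUnion (Ici l) hdisj = univ := by
    ext a; simp [lt_or_ge]
  rw [← h, ← cons_val (notMem_Ioi_self (b := l)), ← Ici_eq_cons_Ioi]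
  rfl

theorem coeff_hsymm_polarizationsFrom_mem {l : Fin n} {d : ℕ} (h : (l : ℕ) < d) (δ : κ →₀ ℕ) :
    coeff δ ((polarizationsFrom k κ l).hsymm d) ∈ polarizedEsymmIdeal k n κ := by
  have hsplit : (Iio l).val.map (polarization k κ) + (polarizationsFrom k κ l : Multiset _) =
      univ.val.map (polarization k κ) := by
    rw [univ_val_eq_Iio_add_cons_Ioi l, Multiset.map_add, Multiset.map_cons, polarizationsFrom,
      ← Multiset.cons_coe, ← Multiset.map_coe, coe_toList]
  have hspan := List.hsymm_mem_span_esymm ((Iio l).val.map (polarization k κ))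
    (polarizationsFrom k κ l) (d := d) (by simpa using h)
  rw [hsplit] at hspan
  refine mem_map_C_iff.1 ((Ideal.span_le.2 ?_) hspan) δ
  rintro _ ⟨j, rfl⟩
  exact polarizedEsymm_succ_mem_map_C j

theorem hsymm_polarizationsFrom_mem (l : Fin n) (d : ℕ) :
    (polarizationsFrom k κ l).hsymm d ∈ homogeneousCoeffsIn k κ {v : Fin n × κ | l ≤ v.1} := by
  refine List.hsymm_mem_subsemiring (fun a ha => ?_) d
  obtain rfl | ⟨i, hi, rfl⟩ : a = polarization k κ l ∨ ∃ i ∈ Ioi l, polarization k κ i = a := by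
    simpa [polarizationsFrom] using ha
  · exact polarization_mem_homogeneousCoeffsIn le_rfl
  · exact polarization_mem_homogeneousCoeffsIn (mem_Ioi.1 hi).le

theorem hsymm_polarizationsFrom_sub_pow_mem (l : Fin n) (d : ℕ) :
    (polarizationsFrom k κ l).hsymm d - polarization k κ l ^ d ∈
      (Ideal.span (X '' {v : Fin n × κ | l < v.1})).map C := by
  refine List.hsymm_cons_sub_pow_mem _ (fun a ha => ?_) d
  obtain ⟨i, hi, rfl⟩ : ∃ i ∈ Ioi l, polarization k κ i = a := by simpa using ha
  refine sum_mem fun j _ => ?_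
  rw [smul_eq_C_mul]
  exact Ideal.mul_mem_right _ _
    (Ideal.mem_map_of_mem C (Ideal.subset_span ⟨(i, j), mem_Ioi.1 hi, rfl⟩))

theorem coeff_polarization_pow (l : Fin n) (γ : κ →₀ ℕ) :
    coeff γ (polarization k κ l ^ γ.degree) =
      monomial (γ.mapDomain (Prod.mk l)) (γ.multinomial : k) := by
  rw [polarization, coeff_linearCombination_X_pow_of_fintype,
    if_pos (show (γ.sum fun _ m => m) = γ.degree from rfl), monomial_eq,
    Finsupp.prod_mapDomain_index (fun _ => pow_zero _) (fun _ _ _ => pow_add _ _ _), map_natCast]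

theorem exists_monomial_add_mem_polarizedEsymmIdeal (l : Fin n) (γ : κ →₀ ℕ)
    (hγ : γ.degree = l + 1) :
    ∃ Q, monomial (γ.mapDomain (Prod.mk l)) (γ.multinomial : k) + Q ∈ polarizedEsymmIdeal k n κ ∧
      ∀ ρ ∈ Q.support, ρ.degree = l + 1 ∧
        toLex (rowDegrees ρ) < toLex (rowDegrees (γ.mapDomain (Prod.mk l))) := by
  classical
  set H := (polarizationsFrom k κ l).hsymm (l + 1)
  set e := γ.mapDomain (Prod.mk l)
  refine ⟨coeff γ H - monomial e (γ.multinomial : k), ?_, fun ρ hρ => ?_⟩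
  · rw [add_sub_cancel]
    exact coeff_hsymm_polarizationsFrom_mem (k := k) (Nat.lt_succ_self l) γ
  have hdiff : coeff γ H - monomial e (γ.multinomial : k) ∈ Ideal.span (X '' {v | l < v.1}) := by
    have h := mem_map_C_iff.1 (hsymm_polarizationsFrom_sub_pow_mem (k := k) l γ.degree) γ
    rwa [coeff_sub, coeff_polarization_pow, hγ] at h
  obtain ⟨v, hlv, hv⟩ := mem_ideal_span_X_image.1 hdiff ρ hρ
  have hrows : ρ.degree = l + 1 ∧ ∀ w ∈ ρ.support, l ≤ w.1 := by
    rcases mem_union.1 (support_sub _ _ _ hρ) with hH | he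
    · obtain ⟨hsupp, hhom⟩ := hsymm_polarizationsFrom_mem (k := k) (κ := κ) l (l + 1) γ
      refine ⟨?_, fun w hw => mem_supported.1 hsupp ((mem_vars_iff_mem_support w).2 ⟨ρ, hH, hw⟩)⟩
      by_contra hne
      exact mem_support_iff.1 hH (hhom.coeff_eq_zero (hγ ▸ hne))
    · rw [mem_singleton.1 (support_monomial_subset he)]
      refine ⟨by rw [Finsupp.degree_mapDomain, hγ], fun w hw => ?_⟩
      obtain ⟨j, -, rfl⟩ := mem_image.1 (Finsupp.mapDomain_support hw)
      exact le_rfl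
  refine ⟨hrows.1, ?_⟩
  rw [rowDegrees_mapDomain_mk, hγ, ← hrows.1]
  exact toLex_rowDegrees_lt_single hrows.2 (Finsupp.mem_support_iff.2 hv) hlv

end RowSplit

theorem monomial_mem_polarizedEsymmIdeal {k : Type*} [Field k] {n : ℕ} {κ : Type*} [Fintype κ]
    (hchar : ringChar k = 0 ∨ n < ringChar k) {μ : Fin n × κ →₀ ℕ} (hμ : n.choose 2 < μ.degree)
    (c : k) : monomial μ c ∈ polarizedEsymmIdeal k n κ := by
  revert hμ c
  refine (InvImage.wf (fun μ => toLex (rowDegrees μ)) wellFounded_lt).induction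
    (C := fun μ => n.choose 2 < μ.degree → ∀ c : k, monomial μ c ∈ polarizedEsymmIdeal k n κ) μ ?_
  intro μ ih hμ
  obtain ⟨l, hl⟩ := exists_lt_rowDegrees hμ
  obtain ⟨γ, hγμ, hγ⟩ := Finsupp.exists_le_degree_eq (μ.curry l) (l + 1) (by
    rw [degree_curry_apply]; exact hl)
  obtain ⟨Q, hQ, hlower⟩ := exists_monomial_add_mem_polarizedEsymmIdeal (k := k) l γ hγ
  have he := mapDomain_mk_le_of_le_curry hγμ
  refine monomial_mem_of_monomial_add_mem he
    (Finsupp.multinomial_cast_ne_zero hchar (by omega)) hQ fun ρ hρ b => ih _ ?_ ?_ b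
  · show toLex (rowDegrees (μ - _ + ρ)) < toLex (rowDegrees μ)
    conv_rhs => rw [← tsub_add_cancel_of_le he]
    rw [rowDegrees_add, rowDegrees_add, toLex_add, toLex_add]
    exact add_lt_add_right (hlower ρ hρ).2 _
  · rw [← tsub_add_cancel_of_le he, map_add, Finsupp.degree_mapDomain, hγ] at hμ
    rw [map_add, (hlower ρ hρ).1]
    exact hμ

/-- For a permutation group `G ≤ Sₙ` acting on `V = kⁿ` (diagonally on `Vᵐ`),
with `char k = 0` or `char k > n`, the top degree of the vector coinvariants
`k[Vᵐ]_G = k[Vᵐ]/I(G,Vᵐ)` is at most `binom(n,2)`: every homogeneous polynomial of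
degree `> n(n-1)/2` lies in the Hilbert ideal `I(G,Vᵐ)`, the ideal generated by the
`G`-invariant polynomials of positive degree (zero constant term). -/
theorem top_degree_vector_coinvariants (k : Type) [Field k] (n m : ℕ)
    (hchar : ringChar k = 0 ∨ n < ringChar k)
    (G : Subgroup (Equiv.Perm (Fin n)))
    (f : MvPolynomial (Fin n × Fin m) k) (d : ℕ) (hd : n.choose 2 < d)
    (hf : f.IsHomogeneous d) :
    f ∈ Ideal.span {h : MvPolynomial (Fin n × Fin m) k |
      (∀ g ∈ G, rename (fun p : Fin n × Fin m => (g⁻¹ p.1, p.2)) h = h) ∧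
      constantCoeff h = 0} := by
  refine polarizedEsymmIdeal_le_span_invariants G ?_
  rw [f.as_sum]
  refine Ideal.sum_mem _ fun μ hμ => monomial_mem_polarizedEsymmIdeal hchar ?_ _
  rwa [Finsupp.degree_eq_weight_one, ← Pi.one_def, hf (mem_support_iff.1 hμ)]
end

section
/- Let G ≤ S_n be a permutation group acting naturally on V = k^n, where k is a field with char(k) = 0 or char(k) > n. Then the Hilbert ideal I(G,V^m) ⊆ k[V^m] is generated by polynomials of degree at most binom(n,2) + 1, and these generators can be chosen to be G-invariant. -/
/-!
A monomial of degree `> binom(n,2)` has a nonempty set `T` of rows (values of the first index)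
each of degree `≥ q := n + 1 - |T|` (a counting argument). Choose `q` variables
`x_{a, y(a,l)}` in each row `a ∈ T` and an injection `e : Fin q → Fin n`. Since `|T| + q > n`,
for every `σ ∈ Sₙ` some `σ (e l)` lies in `T`, so `∏_{a,l} (x_{a,y(a,l)} - x_{σ(e l),y(a,l)}) = 0`.
Summing over `σ` and expanding the product, `n! ∏_{a,l} x_{a,y(a,l)}` becomes a combination of
symmetrizations of nonconstant monomials of degree `≤ |T| q ≤ binom(n,2) + 1`; as `n!` is
invertible, the monomial lies in the ideal generated by `Sₙ`-invariants of degree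
`≤ binom(n,2) + 1`.

The action preserves degrees, so the homogeneous components of a `G`-invariant are
`G`-invariant: those of degree `≤ binom(n,2) + 1` are generators themselves, the others lie in
the ideal above.
-/

open MvPolynomial Finset Nat

namespace HilbertIdeal

theorem mul_le_choose_two_add_one {t q n : ℕ} (h : t + q = n + 1) : t * q ≤ n.choose 2 + 1 := by
  have hchoose : 2 * n.choose 2 = n * (n - 1) := by
    rw [Nat.choose_two_right, Nat.mul_div_cancel' (Nat.even_mul_pred_self n).two_dvd]
  -- for `n ≥ 3` the real bound `4 t q ≤ (n + 1)² ≤ 2 n (n - 1) + 4` suffices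
  rcases lt_or_ge n 3 with hn | hn
  · have : t ≤ n + 1 := by omega
    interval_cases n <;> interval_cases t <;> omega
  · have : (n : ℤ) * (n - 1) = 2 * n.choose 2 := by
      rw [← Nat.cast_pred (by omega)]
      exact_mod_cast hchoose.symm
    nlinarith [sq_nonneg ((t : ℤ) - q)]

theorem exists_nonempty_forall_add_card_le_of_choose_two_lt_sum {ι : Type*} [Fintype ι]
    (c : ι → ℕ) (h : (Fintype.card ι).choose 2 < ∑ a, c a) :
    ∃ T : Finset ι, T.Nonempty ∧ ∀ a ∈ T, Fintype.card ι + 1 ≤ c a + #T := by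
  set n := Fintype.card ι
  -- otherwise each level set `{a | v ≤ c a}` has at most `n - v` elements, and summing over the
  -- levels gives `∑ a, c a ≤ binom(n,2)`
  by_contra! hlight
  have hlevel : ∀ v, #{a | v ≤ c a} ≤ n - v := by
    intro v
    rcases ({a | v ≤ c a} : Finset ι).eq_empty_or_nonempty with hempty | hne
    · simp [hempty]
    · obtain ⟨a, ha, hlt⟩ := hlight _ hne
      have hva : v ≤ c a := (mem_filter.1 ha).2
      omega
  have hlt : ∀ a, c a < n := fun a => by
    have := hlevel (c a)
    have : 0 < #{b | c a ≤ c b} := card_pos.2 ⟨a, by simp⟩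
    omega
  have : ∑ a, c a ≤ n.choose 2 := calc
    ∑ a, c a = ∑ a, #{v ∈ range n | v < c a} := by
      refine sum_congr rfl fun a _ => ?_
      have hrange : {v ∈ range n | v < c a} = range (c a) := by
        ext v
        simp only [mem_filter, mem_range]
        have := hlt a
        omega
      rw [hrange, card_range]
    _ = ∑ v ∈ range n, #{a | v < c a} := by simp only [card_filter]; exact sum_comm
    _ ≤ ∑ v ∈ range n, (n - 1 - v) := sum_le_sum fun v _ => (hlevel (v + 1)).trans (by omega)
    _ = n.choose 2 := by rw [sum_range_reflect (fun v => v) n, sum_range_id, Nat.choose_two_right]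
  omega

theorem exists_apply_mem_of_card_lt_card_add {ι α : Type*} [Fintype ι] [Fintype α]
    [DecidableEq ι] (T : Finset ι) (e : α ↪ ι) (h : Fintype.card ι < #T + Fintype.card α) :
    ∃ x, e x ∈ T := by
  obtain ⟨a, ha⟩ := inter_nonempty_of_card_lt_card_add_card (subset_univ T)
    (subset_univ (univ.map e)) (by simpa using h)
  simp only [mem_inter, mem_map, mem_univ, true_and] at ha
  obtain ⟨haT, x, rfl⟩ := ha
  exact ⟨x, haT⟩

theorem exists_prod_dvd_prod_pow {κ M : Type*} [Fintype κ] [CommMonoid M] (Z : κ → M)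
    (f : κ → ℕ) {q : ℕ} (hq : q ≤ ∑ j, f j) : ∃ y : Fin q → κ, ∏ l, Z (y l) ∣ ∏ j, Z j ^ f j := by
  obtain ⟨g⟩ : Nonempty (Fin q ↪ Σ j, Fin (f j)) :=
    Function.Embedding.nonempty_of_card_le (by simpa using hq)
  refine ⟨fun l => (g l).1, ?_⟩
  calc ∏ l, Z (g l).1 = ∏ x ∈ univ.map g, Z x.1 := (prod_map univ g fun x => Z x.1).symm
    _ ∣ ∏ x : Σ j, Fin (f j), Z x.1 := prod_dvd_prod_of_subset _ _ _ (subset_univ _)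
    _ = ∏ j, Z j ^ f j := by simp [Fintype.prod_sigma]

theorem factorial_ne_zero_of_ringChar {k : Type*} [CommRing k] [IsDomain k] {n : ℕ}
    (h : ringChar k = 0 ∨ n < ringChar k) : (n ! : k) ≠ 0 := by
  rw [Ne, ringChar.spec]
  rcases h with h | h
  · rw [h, zero_dvd_iff]
    exact n.factorial_ne_zero
  · exact fun hdvd => h.not_ge ((CharP.char_prime_of_ne_zero k (by omega)).dvd_factorial.1 hdvd)

theorem monomial_one_eq_prod_prod {R ι κ : Type*} [CommSemiring R] [Fintype ι] [Fintype κ]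
    (u : ι × κ →₀ ℕ) : monomial u (1 : R) = ∏ a, ∏ j, X (a, j) ^ u (a, j) := by
  rw [monomial_eq, C_1, one_mul, Finsupp.prod_fintype _ _ (by simp), Fintype.prod_prod_type]

variable {R ι κ : Type*} [CommRing R]

def lowDegreeInvariants (G : Subgroup (Equiv.Perm ι)) (d : ℕ) : Set (MvPolynomial (ι × κ) R) :=
  {f | (∀ g ∈ G, rename (fun p : ι × κ => (g⁻¹ p.1, p.2)) f = f) ∧
    constantCoeff f = 0 ∧ f.totalDegree ≤ d}

theorem lowDegreeInvariants_subset {G H : Subgroup (Equiv.Perm ι)} {d e : ℕ} (hGH : G ≤ H)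
    (hde : d ≤ e) :
    (lowDegreeInvariants H d : Set (MvPolynomial (ι × κ) R)) ⊆ lowDegreeInvariants G e :=
  fun _ ⟨hinv, hcc, hdeg⟩ => ⟨fun g hg => hinv g (hGH hg), hcc, hdeg.trans hde⟩

section Symmetrize

variable [Fintype ι] [DecidableEq ι]

noncomputable def symmetrize (f : MvPolynomial (ι × κ) R) : MvPolynomial (ι × κ) R :=
  ∑ σ : Equiv.Perm ι, rename (fun p : ι × κ => (σ p.1, p.2)) f

theorem rename_symmetrize (τ : Equiv.Perm ι) (f : MvPolynomial (ι × κ) R) :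
    rename (fun p : ι × κ => (τ p.1, p.2)) (symmetrize f) = symmetrize f := by
  simp only [symmetrize, map_sum, rename_rename]
  exact Fintype.sum_bijective (τ * ·) (Group.mulLeft_bijective τ) _ _ fun _ => rfl

theorem symmetrize_one : symmetrize (1 : MvPolynomial (ι × κ) R) = ((Fintype.card ι)! : _) := by
  simp [symmetrize, Fintype.card_perm]

theorem symmetrize_mem_lowDegreeInvariants {f : MvPolynomial (ι × κ) R} {d : ℕ}
    (hcc : constantCoeff f = 0) (hdeg : f.totalDegree ≤ d) :
    symmetrize f ∈ lowDegreeInvariants ⊤ d := by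
  refine ⟨fun g _ => rename_symmetrize g⁻¹ f, ?_, ?_⟩
  · simp [symmetrize, constantCoeff_rename, hcc]
  · refine (totalDegree_finsetSum _ _).trans (Finset.sup_le fun σ _ => ?_)
    exact (totalDegree_rename_le _ _).trans hdeg

theorem factorial_mul_prod_X_mem_span {P : Type*} [Fintype P] (v : P → ι × κ) (β : P → ι)
    (hcover : ∀ σ : Equiv.Perm ι, ∃ p, σ (β p) = (v p).1) :
    ((Fintype.card ι)! : MvPolynomial (ι × κ) R) * ∏ p, X (v p) ∈
      Ideal.span (lowDegreeInvariants ⊤ (Fintype.card P)) := by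
  classical
  set J : Ideal (MvPolynomial (ι × κ) R) := Ideal.span (lowDegreeInvariants ⊤ (Fintype.card P))
  have hvanish : ∀ σ : Equiv.Perm ι, ∏ p, (X (v p) -
      rename (fun p : ι × κ => (σ p.1, p.2)) (X (β p, (v p).2) : MvPolynomial (ι × κ) R)) = 0 := by
    intro σ
    obtain ⟨p, hp⟩ := hcover σ
    refine prod_eq_zero (mem_univ p) ?_
    rw [rename_X, hp, sub_self]
  have hexpand : ∑ t ∈ (univ : Finset P).powerset,
      (-1 : MvPolynomial (ι × κ) R) ^ #t * (∏ p ∈ univ \ t, X (v p)) *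
        symmetrize (∏ p ∈ t, X (β p, (v p).2)) = 0 := by
    simp_rw [symmetrize, mul_sum, map_prod]
    rw [sum_comm]
    refine sum_eq_zero fun σ _ => ?_
    rw [← hvanish σ, prod_sub]
  have hrest : ∀ t ∈ (univ : Finset P).powerset, t ≠ ∅ →
      (-1 : MvPolynomial (ι × κ) R) ^ #t * (∏ p ∈ univ \ t, X (v p)) *
        symmetrize (∏ p ∈ t, X (β p, (v p).2)) ∈ J := by
    intro t _ ht
    refine J.mul_mem_left _ (Ideal.subset_span (symmetrize_mem_lowDegreeInvariants ?_ ?_))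
    · obtain ⟨p, hp⟩ := nonempty_iff_ne_empty.2 ht
      rw [map_prod]
      exact prod_eq_zero hp (constantCoeff_X (R := R) _)
    · calc (∏ p ∈ t, X (β p, (v p).2) : MvPolynomial (ι × κ) R).totalDegree
          ≤ ∑ p ∈ t, (X (β p, (v p).2) : MvPolynomial (ι × κ) R).totalDegree :=
            totalDegree_finsetProd _ _
        _ ≤ ∑ p ∈ t, 1 := sum_le_sum fun p _ => (totalDegree_monomial_le _ _).trans (by simp)
        _ ≤ Fintype.card P := by simpa using card_le_univ t
  rw [← add_sum_erase _ _ (empty_mem_powerset univ), add_eq_zero_iff_eq_neg] at hexpand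
  simp only [card_empty, pow_zero, one_mul, sdiff_empty, prod_empty, symmetrize_one] at hexpand
  rw [mul_comm, hexpand]
  exact J.neg_mem (J.sum_mem fun t ht => hrest t (mem_of_mem_erase ht) (ne_of_mem_erase ht))

theorem monomial_one_mem_span_of_choose_two_lt_degree [Fintype κ]
    (hfac : IsUnit ((Fintype.card ι)! : R)) {u : ι × κ →₀ ℕ}
    (hu : (Fintype.card ι).choose 2 < u.degree) :
    monomial u (1 : R) ∈ Ideal.span (lowDegreeInvariants ⊤ ((Fintype.card ι).choose 2 + 1)) := by
  set n := Fintype.card ι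
  obtain ⟨T, hT, hheavy⟩ := exists_nonempty_forall_add_card_le_of_choose_two_lt_sum
    (fun a => ∑ j, u (a, j)) (by rwa [← Fintype.sum_prod_type', ← Finsupp.degree_eq_sum])
  set q := n + 1 - #T
  have hTq : #T + q = n + 1 := by have := card_le_univ T; have := hT.card_pos; omega
  obtain ⟨e⟩ : Nonempty (Fin q ↪ ι) := Function.Embedding.nonempty_of_card_le <| by
    rw [Fintype.card_fin]; have := hT.card_pos; omega
  choose y hy using fun a : T => exists_prod_dvd_prod_pow
    (fun j => (X (a.1, j) : MvPolynomial (ι × κ) R)) (fun j => u (a.1, j)) (q := q)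
    (by have := hheavy a a.2; omega)
  have hcover (σ : Equiv.Perm ι) : ∃ p : T × Fin q, σ (e p.2) = p.1.1 := by
    obtain ⟨l, hl⟩ := exists_apply_mem_of_card_lt_card_add T (e.trans σ.toEmbedding)
      (by rw [Fintype.card_fin]; omega)
    exact ⟨(⟨_, hl⟩, l), rfl⟩
  have hprod := factorial_mul_prod_X_mem_span (R := R)
    (fun p : T × Fin q => (p.1.1, y p.1 p.2)) (fun p => e p.2) hcover
  have hdeg : Fintype.card (T × Fin q) ≤ n.choose 2 + 1 := by
    simpa using mul_le_choose_two_add_one hTq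
  rw [← map_natCast C, Ideal.unit_mul_mem_iff_mem _ (hfac.map C)] at hprod
  refine Ideal.mem_of_dvd _ ?_ (Ideal.span_mono (lowDegreeInvariants_subset le_rfl hdeg) hprod)
  calc ∏ p : T × Fin q, X (p.1.1, y p.1 p.2)
      = ∏ a : T, ∏ l, X (a.1, y a l) := Fintype.prod_prod_type _
    _ ∣ ∏ a : T, ∏ j, X (a.1, j) ^ u (a.1, j) := prod_dvd_prod_of_dvd _ _ fun a _ => hy a
    _ = ∏ a ∈ T, ∏ j, X (a, j) ^ u (a, j) := prod_coe_sort T fun a => ∏ j, X (a, j) ^ u (a, j)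
    _ ∣ ∏ a, ∏ j, X (a, j) ^ u (a, j) := prod_dvd_prod_of_subset _ _ _ (subset_univ T)
    _ = monomial u 1 := (monomial_one_eq_prod_prod u).symm

theorem mem_span_lowDegreeInvariants_of_invariant [Fintype κ]
    (hfac : IsUnit ((Fintype.card ι)! : R)) (G : Subgroup (Equiv.Perm ι))
    {h : MvPolynomial (ι × κ) R} (hinv : ∀ g ∈ G, rename (fun p : ι × κ => (g⁻¹ p.1, p.2)) h = h)
    (hcc : constantCoeff h = 0) :
    h ∈ Ideal.span (lowDegreeInvariants G ((Fintype.card ι).choose 2 + 1)) := by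
  rw [← sum_homogeneousComponent h]
  refine Ideal.sum_mem _ fun i _ => ?_
  rcases Nat.eq_zero_or_pos i with rfl | hi
  · simp [← constantCoeff_eq, hcc]
  by_cases hid : i ≤ (Fintype.card ι).choose 2 + 1
  · refine Ideal.subset_span ⟨fun g hg => ?_, ?_, ?_⟩
    · rw [rename_homogeneousComponent, hinv g hg]
    · rw [constantCoeff_eq, coeff_homogeneousComponent, if_neg (by rw [map_zero]; omega)]
    · exact (homogeneousComponent_isHomogeneous i h).totalDegree_le.trans hid
  · rw [homogeneousComponent_apply]
    refine Ideal.span_mono (lowDegreeInvariants_subset le_top le_rfl)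
      (Ideal.sum_mem _ fun u hu => ?_)
    rw [← mul_one (coeff u h), ← C_mul_monomial]
    refine Ideal.mul_mem_left _ _ (monomial_one_mem_span_of_choose_two_lt_degree hfac ?_)
    rw [(mem_filter.1 hu).2]
    omega

end Symmetrize

end HilbertIdeal

open HilbertIdeal

/-- For a permutation group `G ≤ Sₙ` acting on `V = kⁿ` (diagonally on `Vᵐ`),
with `char k = 0` or `char k > n`, the Hilbert ideal `I(G,Vᵐ)` (the ideal generated by the
`G`-invariant polynomials of positive degree) is generated by `G`-invariant polynomials of
degree at most `binom(n,2) + 1`. -/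
theorem hilbert_ideal_generated_in_small_degree (k : Type) [Field k] (n m : ℕ)
    (hchar : ringChar k = 0 ∨ n < ringChar k)
    (G : Subgroup (Equiv.Perm (Fin n))) :
    ∃ S : Set (MvPolynomial (Fin n × Fin m) k),
      (∀ f ∈ S, (∀ g ∈ G, rename (fun p : Fin n × Fin m => (g⁻¹ p.1, p.2)) f = f) ∧
        f.totalDegree ≤ n.choose 2 + 1) ∧
      Ideal.span S = Ideal.span {h : MvPolynomial (Fin n × Fin m) k |
        (∀ g ∈ G, rename (fun p : Fin n × Fin m => (g⁻¹ p.1, p.2)) h = h) ∧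
        constantCoeff h = 0} := by
  have hfac : IsUnit ((Fintype.card (Fin n))! : k) := by
    rw [Fintype.card_fin]
    exact (factorial_ne_zero_of_ringChar hchar).isUnit
  refine ⟨lowDegreeInvariants G (n.choose 2 + 1), fun f hf => ⟨hf.1, hf.2.2⟩,
    le_antisymm (Ideal.span_mono fun f hf => ⟨hf.1, hf.2.1⟩) (Ideal.span_le.2 ?_)⟩
  rintro h ⟨hinv, hcc⟩
  simpa using mem_span_lowDegreeInvariants_of_invariant hfac G hinv hcc
end

section
/- Assume char(k) = 0. Let M and M' be monomials in k[x_1,…,x_n] with M' < M in the lexicographic order with x_1 > x_2 > … > x_n. Then for every m-tuple k = (k_1,…,k_m) ∈ ℕ^m for which Pol_k(M) and Pol_k(M') are nonzero, the leading monomial of Pol_k(M') is strictly smaller than the leading monomial of Pol_k(M) with respect to the lexicographic order on k[x_i^{(j)}] with x_1^{(1)} > x_1^{(2)} > … > x_1^{(m)} > x_2^{(1)} > … > x_2^{(m)} > … > x_n^{(m)}. -/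
/-!
Over `ℕ` nothing cancels, so the coefficient of `x^d` in `Pol_κ(x^a)` is nonzero exactly when the
`n × m` matrix `d` has row sums `a` and column sums `κ`: each factor `Σⱼ x_i^{(j)} t_j` of
`∏ᵢ (Σⱼ x_i^{(j)} t_j)^{a_i}` adds one unit to some entry `(i, j)`. In characteristic zero the
same holds after casting. Let `d'` be the leading matrix for `a'` and `i₀` the first index with
`a'_{i₀} < a_{i₀}`. Keep the rows `≤ i₀` of `d'` and refill the rows below with any matrix whose
row sums are `a_i - a'_i [i ≤ i₀]` and whose column sums are those of the discarded rows; the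
totals agree, so such a matrix exists. The result `e` has margins `(a, κ)` and first differs
from `d'` in row `i₀`, where it is larger, so `d' < e ≤ LeadM(Pol_κ(x^a))`.
-/

open MvPolynomial

/-- The polarization `Pol_κ(f)`: the coefficient of `t₁^{κ₁} ⋯ t_m^{κ_m}` in `Φ(f)` where
`Φ : k[x₁,…,xₙ] → k[x_i^{(j)}][t₁,…,t_m]` is the algebra map sending `x_i ↦ Σ_j x_i^{(j)} t_j`.
The variables `x_i^{(j)}` are indexed by `emb i j : σ`. -/
noncomputable def Pol {k : Type*} [CommSemiring k] {n m : ℕ} {σ : Type*}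
    (emb : Fin n → Fin m → σ) (f : MvPolynomial (Fin n) k) (κ : Fin m → ℕ) :
    MvPolynomial σ k :=
  MvPolynomial.coeff (Finsupp.equivFunOnFinite.symm κ)
    (MvPolynomial.aeval
      (fun i => ∑ j : Fin m, (MvPolynomial.C (MvPolynomial.X (emb i j)) * MvPolynomial.X j :
        MvPolynomial (Fin m) (MvPolynomial σ k))) f)

/-- The leading monomial (exponent vector) of a polynomial with respect to the lexicographic
order where variables with smaller index in `σ` are larger (junk value `0` for `f = 0`). -/
noncomputable def leadM {k : Type*} [CommSemiring k] {σ : Type*}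
    [LinearOrder σ] (f : MvPolynomial σ k) : Lex (σ →₀ ℕ) :=
  letI : DecidableEq (Lex (σ →₀ ℕ)) := Classical.decEq _
  WithBot.unbotD (toLex 0) ((f.support.image (toLex : (σ →₀ ℕ) → Lex (σ →₀ ℕ))).max)

open Finsupp

theorem Finsupp.induction_add_single_one {ι : Type*} {motive : (ι →₀ ℕ) → Prop}
    (zero : motive 0) (add_single : ∀ a i, motive a → motive (a + single i 1)) (a : ι →₀ ℕ) :
    motive a := by
  induction a using Finsupp.induction with
  | zero => exact zero
  | single_add i e a _ _ ha =>
    rw [add_comm]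
    clear * - ha add_single
    induction e with
    | zero => simpa using ha
    | succ e ih => rw [single_add, ← add_assoc]; exact add_single _ i ih

theorem Finsupp.toLex_lt_of_forall_le_eq_zero {α : Type*} [LinearOrder α] {f g : α →₀ ℕ} {q : α}
    (hq : g q ≠ 0) (hf : ∀ t ≤ q, f t = 0) : toLex f < toLex g := by
  have hne : g.support.Nonempty := ⟨q, mem_support_iff.mpr hq⟩
  have hsq : g.support.min' hne ≤ q := Finset.min'_le _ _ (mem_support_iff.mpr hq)
  refine Lex.lt_iff.mpr ⟨g.support.min' hne, fun t ht => ?_, ?_⟩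
  · have hgt : g t = 0 := notMem_support_iff.mp fun h => (Finset.min'_le _ _ h).not_gt ht
    simp [hf t (ht.le.trans hsq), hgt]
  · simpa [hf _ hsq, pos_iff_ne_zero] using mem_support_iff.mp (Finset.min'_mem _ hne)

theorem Pi.sub_single_add_single {α : Type*} [DecidableEq α] {f : α → ℕ} {x : α} (h : f x ≠ 0) :
    f - Pi.single x 1 + Pi.single x 1 = f := by
  ext y
  rcases eq_or_ne y x with rfl | hy
  · simpa using Nat.sub_add_cancel (Nat.one_le_iff_ne_zero.mpr h)
  · simp [hy]

section Margins

variable {ι J : Type*}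

def rowSum [Fintype J] (d : Lex (ι × J) →₀ ℕ) (i : ι) : ℕ := ∑ j, d (toLex (i, j))

def colSum [Fintype ι] (d : Lex (ι × J) →₀ ℕ) (j : J) : ℕ := ∑ i, d (toLex (i, j))

theorem rowSum_add [Fintype J] (d e : Lex (ι × J) →₀ ℕ) :
    rowSum (d + e) = rowSum d + rowSum e := by
  ext i
  simp [rowSum, Finset.sum_add_distrib]

theorem colSum_add [Fintype ι] (d e : Lex (ι × J) →₀ ℕ) :
    colSum (d + e) = colSum d + colSum e := by
  ext j
  simp [colSum, Finset.sum_add_distrib]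

theorem rowSum_single [Fintype J] [DecidableEq ι] (i : ι) (j : J) (c : ℕ) :
    rowSum (single (toLex (i, j)) c) = Pi.single i c := by
  classical
  ext i'
  rcases eq_or_ne i' i with rfl | h
  · simp [rowSum, single_apply]
  · simp [rowSum, h]

theorem colSum_single [Fintype ι] [DecidableEq J] (i : ι) (j : J) (c : ℕ) :
    colSum (single (toLex (i, j)) c) = Pi.single j c := by
  classical
  ext j'
  rcases eq_or_ne j' j with rfl | h
  · simp [colSum, single_apply]
  · simp [colSum, h]

theorem rowSum_filter [Fintype J] (p : ι → Prop) [DecidablePred p] (d : Lex (ι × J) →₀ ℕ)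
    (i : ι) : rowSum (d.filter fun t => p (ofLex t).1) i = if p i then rowSum d i else 0 := by
  split_ifs with h <;> simp [rowSum, filter_apply, h]

theorem sum_rowSum [Fintype ι] [Fintype J] (d : Lex (ι × J) →₀ ℕ) :
    ∑ i, rowSum d i = ∑ j, colSum d j :=
  Finset.sum_comm

theorem eq_zero_of_rowSum_eq_zero [Fintype J] {d : Lex (ι × J) →₀ ℕ} (h : rowSum d = 0) :
    d = 0 := by
  ext t
  exact Finset.sum_eq_zero_iff.mp (congrFun h (ofLex t).1) (ofLex t).2 (Finset.mem_univ _)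

theorem exists_eq_add_single_of_rowSum_ne_zero [Fintype J] {d : Lex (ι × J) →₀ ℕ} {i : ι}
    (h : rowSum d i ≠ 0) : ∃ j d₁, d = d₁ + single (toLex (i, j)) 1 := by
  obtain ⟨j, -, hj⟩ := Finset.exists_ne_zero_of_sum_ne_zero h
  exact ⟨j, d - single _ 1, (tsub_add_cancel_of_le (single_le_iff.mpr (by omega))).symm⟩

theorem exists_rowSum_colSum_eq [Fintype ι] [Fintype J] (r : ι → ℕ) (c : J → ℕ)
    (h : ∑ i, r i = ∑ j, c j) : ∃ d : Lex (ι × J) →₀ ℕ, rowSum d = r ∧ colSum d = c := by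
  classical
  induction hN : ∑ i, r i generalizing r c with
  | zero =>
    have hr : r = 0 := funext fun i => Finset.sum_eq_zero_iff.mp hN i (Finset.mem_univ i)
    have hc : c = 0 := funext fun j => Finset.sum_eq_zero_iff.mp (h ▸ hN) j (Finset.mem_univ j)
    exact ⟨0, by ext; simp [rowSum, hr], by ext; simp [colSum, hc]⟩
  | succ N ih =>
    obtain ⟨i, -, hi⟩ := Finset.exists_ne_zero_of_sum_ne_zero (s := .univ) (f := r) (by omega)
    obtain ⟨j, -, hj⟩ := Finset.exists_ne_zero_of_sum_ne_zero (s := .univ) (f := c) (by omega)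
    have hr := Pi.sub_single_add_single hi
    have hc := Pi.sub_single_add_single hj
    have hsr : ∑ x, (r - Pi.single i 1 : ι → ℕ) x + 1 = ∑ x, r x := by
      conv_rhs => rw [← hr]
      simp [Finset.sum_add_distrib]
    have hsc : ∑ x, (c - Pi.single j 1 : J → ℕ) x + 1 = ∑ x, c x := by
      conv_rhs => rw [← hc]
      simp [Finset.sum_add_distrib]
    obtain ⟨d, hdr, hdc⟩ := ih (r - Pi.single i 1) (c - Pi.single j 1) (by omega) (by omega)
    exact ⟨d + single (toLex (i, j)) 1, by rw [rowSum_add, rowSum_single, hdr, hr],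
      by rw [colSum_add, colSum_single, hdc, hc]⟩

end Margins

theorem exists_rowSum_colSum_eq_toLex_gt {ι J : Type*} [Fintype ι] [LinearOrder ι] [Fintype J]
    [LinearOrder J] {a a' : ι →₀ ℕ} {c : J → ℕ} {d' : Lex (ι × J) →₀ ℕ}
    (hrow : rowSum d' = a') (hcol : colSum d' = c) (hsum : ∑ i, a i = ∑ j, c j)
    (hlt : toLex a' < toLex a) :
    ∃ e : Lex (ι × J) →₀ ℕ, rowSum e = a ∧ colSum e = c ∧ toLex d' < toLex e := by
  classical
  obtain ⟨i₀, hagree, hlt₀⟩ := Lex.lt_iff.mp hlt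
  simp only [ofLex_toLex] at hagree hlt₀
  set low := d'.filter fun t => (ofLex t).1 ≤ i₀
  set high := d'.filter fun t => ¬(ofLex t).1 ≤ i₀
  have hsplit : low + high = d' := filter_add_filter_not _ _
  have hlow : ∀ i, rowSum low i = if i ≤ i₀ then a' i else 0 := fun i => by
    rw [rowSum_filter (· ≤ i₀), hrow]
  have hlow_le : rowSum low ≤ a := fun i => by
    rw [hlow]
    split_ifs with h
    · rcases h.lt_or_eq with h | rfl
      exacts [(hagree i h).le, hlt₀.le]
    · exact Nat.zero_le _
  have htotal : ∑ i, (a - rowSum low) i = ∑ j, colSum high j := by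
    have hsplit_sum : ∑ i, rowSum low i + ∑ i, rowSum high i = ∑ i, a i := by
      rw [← Finset.sum_add_distrib, ← Pi.add_def, ← rowSum_add, hsplit, hsum, sum_rowSum, hcol]
    rw [← sum_rowSum, Pi.sub_def, Finset.sum_tsub_distrib _ fun i _ => hlow_le i]
    omega
  obtain ⟨g, hg_row, hg_col⟩ := exists_rowSum_colSum_eq _ _ htotal
  obtain ⟨j, -, hj⟩ : ∃ j ∈ Finset.univ, g (toLex (i₀, j)) ≠ 0 := by
    refine Finset.exists_ne_zero_of_sum_ne_zero (?_ : rowSum g i₀ ≠ 0)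
    simp only [hg_row, Pi.sub_apply, hlow, le_refl, if_true]
    omega
  refine ⟨low + g, ?_, ?_, ?_⟩
  · rw [rowSum_add, hg_row]
    exact add_tsub_cancel_of_le hlow_le
  · rw [colSum_add, hg_col, ← colSum_add, hsplit, hcol]
  · rw [← hsplit, toLex_add, toLex_add]
    refine add_lt_add_right (toLex_lt_of_forall_le_eq_zero hj fun t ht => ?_) _
    exact filter_apply_neg _ _ (not_not.mpr (Prod.Lex.monotone_fst _ _ ht))

theorem MvPolynomial.coeff_coeff_mul_ne_zero_iff {σ τ : Type*}
    {p q : MvPolynomial τ (MvPolynomial σ ℕ)} {κ : τ →₀ ℕ} {d : σ →₀ ℕ} :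
    coeff d (coeff κ (p * q)) ≠ 0 ↔ ∃ κ₁ κ₂ d₁ d₂, κ₁ + κ₂ = κ ∧ d₁ + d₂ = d ∧
      coeff d₁ (coeff κ₁ p) ≠ 0 ∧ coeff d₂ (coeff κ₂ q) ≠ 0 := by
  classical
  simp only [coeff_mul, coeff_sum, ne_eq, Finset.sum_eq_zero_iff, not_forall, mul_eq_zero,
    not_or, Finset.HasAntidiagonal.mem_antidiagonal, Prod.exists, exists_prop]
  constructor
  · rintro ⟨κ₁, κ₂, hκ, d₁, d₂, hd, h⟩
    exact ⟨κ₁, κ₂, d₁, d₂, hκ, hd, h⟩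
  · rintro ⟨κ₁, κ₂, d₁, d₂, hκ, hd, h⟩
    exact ⟨κ₁, κ₂, hκ, d₁, d₂, hd, h⟩

section PolVar

variable {ι J : Type*} [Fintype J]

/-- `Φ(x_i) = Σⱼ x_i^{(j)} t_j`, the outer variables being the `t_j`. -/
noncomputable def polVar (R : Type*) [CommSemiring R] (i : ι) :
    MvPolynomial J (MvPolynomial (Lex (ι × J)) R) :=
  ∑ j, C (X (toLex (i, j))) * X j

theorem coeff_coeff_polVar_ne_zero_iff {i : ι} {κ : J →₀ ℕ} {d : Lex (ι × J) →₀ ℕ} :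
    coeff d (coeff κ (polVar ℕ i)) ≠ 0 ↔
      ∃ j, κ = single j 1 ∧ d = single (toLex (i, j)) 1 := by
  classical
  simp only [polVar, coeff_sum, C_mul_X_eq_monomial, coeff_monomial, coeff_X, apply_ite,
    coeff_zero, ne_eq, Finset.sum_eq_zero_iff, Finset.mem_univ, true_implies, not_forall]
  refine exists_congr fun j => ?_
  split_ifs <;> simp_all [eq_comm]

theorem coeff_coeff_aeval_polVar_monomial_ne_zero_iff [Fintype ι] (a : ι →₀ ℕ) (κ : J →₀ ℕ)
    (d : Lex (ι × J) →₀ ℕ) :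
    coeff d (coeff κ (aeval (polVar ℕ) (monomial a 1))) ≠ 0 ↔ rowSum d = a ∧ colSum d = κ := by
  classical
  induction a using Finsupp.induction_add_single_one generalizing κ d with
  | zero =>
    rw [monomial_zero', C_1, map_one, Finsupp.coe_zero]
    constructor
    · intro h
      obtain rfl : κ = 0 := by by_contra hκ; simp [coeff_one, Ne.symm hκ] at h
      obtain rfl : d = 0 := by by_contra hd; simp [coeff_one, Ne.symm hd] at h
      constructor <;> ext <;> simp [rowSum, colSum]
    · rintro ⟨hr, hc⟩
      obtain rfl := eq_zero_of_rowSum_eq_zero hr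
      obtain rfl : κ = 0 := by ext j; simp [← congrFun hc j, colSum]
      simp
  | add_single a i ih =>
    rw [monomial_add_single, pow_one, map_mul, aeval_X, coeff_coeff_mul_ne_zero_iff]
    constructor
    · rintro ⟨κ₁, κ₂, d₁, d₂, rfl, rfl, h₁, h₂⟩
      obtain ⟨hr, hc⟩ := (ih κ₁ d₁).mp h₁
      obtain ⟨j, rfl, rfl⟩ := coeff_coeff_polVar_ne_zero_iff.mp h₂
      simp [rowSum_add, colSum_add, rowSum_single, colSum_single, hr, hc, single_eq_pi_single]
    · rintro ⟨hr, hc⟩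
      obtain ⟨j, d₁, rfl⟩ := exists_eq_add_single_of_rowSum_ne_zero (d := d) (i := i) (by simp [hr])
      rw [rowSum_add, rowSum_single, Finsupp.coe_add, single_eq_pi_single] at hr
      rw [colSum_add, colSum_single] at hc
      refine ⟨κ - single j 1, single j 1, d₁, _, tsub_add_cancel_of_le ?_, rfl,
        (ih _ _).mpr ⟨add_right_cancel hr, ?_⟩, coeff_coeff_polVar_ne_zero_iff.mpr ⟨j, rfl, rfl⟩⟩
      · exact single_le_iff.mpr (by simp [← congrFun hc j])
      · rw [Finsupp.coe_tsub, ← hc, single_eq_pi_single, add_tsub_cancel_right]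

end PolVar

theorem map_Pol {R S : Type*} [CommSemiring R] [CommSemiring S] (f : R →+* S) {n m : ℕ}
    {σ : Type*} (emb : Fin n → Fin m → σ) (p : MvPolynomial (Fin n) R) (κ : Fin m → ℕ) :
    map f (Pol emb p κ) = Pol emb (map f p) κ := by
  simp only [Pol, ← coeff_map]
  congr 1
  rw [aeval_def, aeval_def, eval₂_map, eval₂_comp_left]
  congr 1
  · ext1 x
    simp only [RingHom.comp_apply, MvPolynomial.algebraMap_apply, map_C, Algebra.algebraMap_self,
      RingHom.id_apply]
  · ext i : 1
    simp

theorem Pol_toLex_eq_coeff_aeval_polVar {R : Type*} [CommSemiring R] {n m : ℕ}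
    (f : MvPolynomial (Fin n) R) (κ : Fin m → ℕ) :
    Pol (fun i j => toLex (i, j)) f κ = coeff (equivFunOnFinite.symm κ) (aeval (polVar R) f) :=
  rfl

theorem coeff_Pol_monomial_ne_zero_iff {k : Type*} [CommSemiring k] [CharZero k] {n m : ℕ}
    (a : Fin n →₀ ℕ) (κ : Fin m → ℕ) (d : Lex (Fin n × Fin m) →₀ ℕ) :
    coeff d (Pol (fun i j => toLex (i, j)) (monomial a (1 : k)) κ) ≠ 0 ↔
      rowSum d = a ∧ colSum d = κ := by
  have hcast : monomial a (1 : k) = map (Nat.castRingHom k) (monomial a 1) := by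
    simp [map_monomial]
  rw [hcast, ← map_Pol, coeff_map, eq_natCast, ne_eq, Nat.cast_eq_zero, ← ne_eq,
    Pol_toLex_eq_coeff_aeval_polVar, coeff_coeff_aeval_polVar_monomial_ne_zero_iff,
    coe_equivFunOnFinite_symm]

section LeadM

variable {k σ : Type*} [CommSemiring k] [LinearOrder σ] {f : MvPolynomial σ k}

theorem toLex_le_leadM {d : σ →₀ ℕ} (hd : d ∈ f.support) : toLex d ≤ leadM f := by
  let : DecidableEq (Lex (σ →₀ ℕ)) := Classical.decEq _
  unfold leadM
  have hmem := Finset.mem_image_of_mem toLex hd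
  obtain ⟨M, hM⟩ := Finset.max_of_mem hmem
  rw [hM, WithBot.unbotD_coe]
  exact WithBot.coe_le_coe.mp (hM ▸ Finset.le_max hmem)

theorem exists_mem_support_leadM_eq (hf : f ≠ 0) : ∃ d ∈ f.support, leadM f = toLex d := by
  let : DecidableEq (Lex (σ →₀ ℕ)) := Classical.decEq _
  unfold leadM
  obtain ⟨M, hM⟩ := Finset.max_of_nonempty ((support_nonempty.mpr hf).image toLex)
  obtain ⟨d, hd, rfl⟩ := Finset.mem_image.mp (Finset.mem_of_max hM)
  exact ⟨d, hd, by rw [hM, WithBot.unbotD_coe]⟩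

end LeadM

/-- over a field of characteristic zero, if `M' < M` are monomials of
`k[x₁,…,xₙ]` in the lex order with `x₁ > ⋯ > xₙ`, then for any `κ ∈ ℕᵐ` with
`Pol_κ(M) ≠ 0` and `Pol_κ(M') ≠ 0` one has `LeadM(Pol_κ(M')) < LeadM(Pol_κ(M))`
in the lex order on `k[x_i^{(j)}]` with
`x₁^{(1)} > x₁^{(2)} > ⋯ > x₁^{(m)} > x₂^{(1)} > ⋯ > xₙ^{(m)}`. -/
theorem leadM_pol_lt_of_lt (k : Type) [Field k] [CharZero k] (n m : ℕ)
    (a a' : Fin n →₀ ℕ) (hlt : toLex a' < toLex a) (κ : Fin m → ℕ)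
    (hM : Pol (fun i j => toLex (i, j) : Fin n → Fin m → Lex (Fin n × Fin m))
      (monomial a (1 : k)) κ ≠ 0)
    (hM' : Pol (fun i j => toLex (i, j) : Fin n → Fin m → Lex (Fin n × Fin m))
      (monomial a' (1 : k)) κ ≠ 0) :
    leadM (Pol (fun i j => toLex (i, j) : Fin n → Fin m → Lex (Fin n × Fin m))
        (monomial a' (1 : k)) κ) <
      leadM (Pol (fun i j => toLex (i, j) : Fin n → Fin m → Lex (Fin n × Fin m))
        (monomial a (1 : k)) κ) := by
  obtain ⟨d, hd⟩ := ne_zero_iff.mp hM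
  obtain ⟨hrow, hcol⟩ := (coeff_Pol_monomial_ne_zero_iff a κ d).mp hd
  obtain ⟨d', hd', hlead⟩ := exists_mem_support_leadM_eq hM'
  obtain ⟨hrow', hcol'⟩ :=
    (coeff_Pol_monomial_ne_zero_iff a' κ d').mp (MvPolynomial.mem_support_iff.mp hd')
  obtain ⟨e, hrow_e, hcol_e, hlt_e⟩ :=
    exists_rowSum_colSum_eq_toLex_gt hrow' hcol' (by rw [← hrow, ← hcol, sum_rowSum]) hlt
  rw [hlead]
  exact hlt_e.trans_le <| toLex_le_leadM <| MvPolynomial.mem_support_iff.mpr <|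
    (coeff_Pol_monomial_ne_zero_iff a κ e).mpr ⟨hrow_e, hcol_e⟩
end

section
/- Let G ≤ S_n be a permutation group acting naturally on V = k^n, where char(k) = 0 or char(k) > n. Then the lead term ideal Lead(I(G,V^m)) (with respect to the lexicographic order with x_1^{(1)} > x_1^{(2)} > … > x_1^{(m)} > x_2^{(1)} > … > x_n^{(m)}) contains every monomial of the form ∏_{j=1}^m (x_i^{(j)})^{k_j} with 1 ≤ i ≤ n and k_1 + ⋯ + k_m = i. -/
/-!
Put `L_l = ∑_j t_j x_l^{(j)}` with auxiliary variables `t_1, …, t_m`. In the power series ring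
in `t` over `k[V^m]`, the coefficients of `H = ∏_l (1 - L_l)⁻¹` are the polarized complete
homogeneous symmetric polynomials: they are `Sₙ`-invariant and, in positive `t`-degree, have no
constant term. Multiplying `H` by the polynomial `∏_{l<i} (1 - L_l)`, of `t`-degree `i - 1`, gives
`∏_{l≥i} (1 - L_l)⁻¹`; hence its `t^κ`-coefficient with `|κ| = i` involves only positive-degree
coefficients of `H` and lies in the Hilbert ideal. Expanding the product, that coefficient is a sum
of monomials `∏_{l≥i} x_l^{μ_l}` with `∑ μ_l = κ`, and pushing exponents from row `i` to later
rows lowers a monomial in the lex order. So its leading term is `multinomial(κ) · x_i^κ`, and the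
multinomial coefficient divides `i!`, which is nonzero in `k` under the characteristic assumption.
-/

open MvPolynomial

/-- The lead term ideal of an ideal `I`: the ideal generated by the leading monomials of
all nonzero elements of `I`. -/
noncomputable def leadIdeal {k : Type*} [CommSemiring k] {σ : Type*} [LinearOrder σ]
    (I : Ideal (MvPolynomial σ k)) : Ideal (MvPolynomial σ k) :=
  Ideal.span {p | ∃ f ∈ I, f ≠ 0 ∧ p = monomial (ofLex (leadM f)) (1 : k)}

section

open Finset Nat

section Multinomial

variable {ι : Type*} [DecidableEq ι]

lemma Finsupp.coe_tsub_single_one (ν : ι →₀ ℕ) (j : ι) :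
    ⇑(ν - Finsupp.single j 1 : ι →₀ ℕ) = Function.update ν j (ν j - 1) := by
  ext i
  rcases eq_or_ne i j with rfl | hij
  · simp
  · simp [hij]

lemma Nat.prod_factorial_mul_multinomial_tsub_single [Fintype ι] {ν : ι →₀ ℕ} {j : ι}
    (hj : ν j ≠ 0) :
    (∏ i, (ν i)!) * multinomial univ ⇑(ν - Finsupp.single j 1 : ι →₀ ℕ) =
      ν j * (ν.degree - 1)! := by
  have hprod : ∏ i, (ν i)! = ν j * ∏ i, ((ν - Finsupp.single j 1 : ι →₀ ℕ) i)! := by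
    simp_rw [Finsupp.coe_tsub_single_one, Function.apply_update (fun _ n => n !)]
    rw [prod_update_of_mem (mem_univ j), prod_eq_mul_prod_sdiff_singleton_of_mem (mem_univ j),
      ← mul_assoc, mul_factorial_pred hj]
  have hsum : ∑ i, (ν - Finsupp.single j 1 : ι →₀ ℕ) i = ν.degree - 1 := by
    rw [Finsupp.coe_tsub_single_one, sum_update_of_mem (mem_univ j), Finsupp.degree_eq_sum,
      sum_eq_add_sum_sdiff_singleton_of_mem (mem_univ j)]
    omega
  rw [hprod, mul_assoc, multinomial_spec, hsum]

lemma Nat.multinomial_eq_sum_multinomial_tsub_single [Fintype ι] {ν : ι →₀ ℕ} (hν : ν ≠ 0) :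
    multinomial univ ν =
      ∑ j ∈ ν.support, multinomial univ ⇑(ν - Finsupp.single j 1 : ι →₀ ℕ) := by
  have hpos : 0 < ∏ i, (ν i)! := prod_pos fun _ _ => factorial_pos _
  refine Nat.eq_of_mul_eq_mul_left hpos ?_
  rw [mul_sum, sum_congr rfl fun j hj =>
      prod_factorial_mul_multinomial_tsub_single (Finsupp.mem_support_iff.1 hj),
    ← sum_mul, ← Finsupp.degree_apply, multinomial_spec, ← Finsupp.degree_eq_sum,
    mul_factorial_pred ((Finsupp.degree_eq_zero_iff ν).not.2 hν)]

end Multinomial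

lemma Nat.cast_multinomial_ne_zero {K ι : Type*} [CommRing K] [IsDomain K] (s : Finset ι)
    (f : ι → ℕ) (h : ringChar K = 0 ∨ ∑ i ∈ s, f i < ringChar K) :
    (multinomial s f : K) ≠ 0 := by
  suffices hfac : ((∑ i ∈ s, f i)! : K) ≠ 0 by
    intro h0
    rw [← multinomial_spec, Nat.cast_mul, h0, mul_zero] at hfac
    exact hfac rfl
  rcases h with h0 | hlt
  · have := (CharP.ringChar_zero_iff_CharZero K).1 h0
    exact Nat.cast_ne_zero.2 (factorial_ne_zero _)
  · have hp : (ringChar K).Prime :=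
      (CharP.char_is_prime_or_zero K _).resolve_right (by omega)
    rw [Ne, ringChar.spec, hp.dvd_factorial]
    omega

lemma toLex_sum {α β : Type*} [AddCommMonoid β] (s : Finset α) (f : α → β) :
    toLex (∑ a ∈ s, f a) = ∑ a ∈ s, toLex (f a) :=
  map_sum (toLexAddEquiv β) f s

lemma Finset.exists_ne_and_ne_zero_of_mem_finsuppAntidiag {ι M : Type*} [DecidableEq ι]
    [AddCommMonoid M] [HasAntidiagonal M] [DecidableEq M] {s : Finset ι} {a : ι} {κ : M}
    {μ : ι →₀ M} (hμ : μ ∈ s.finsuppAntidiag κ) (hne : μ ≠ Finsupp.single a κ) :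
    ∃ l ∈ s, l ≠ a ∧ μ l ≠ 0 := by
  rw [mem_finsuppAntidiag] at hμ
  obtain ⟨hsum, hsupp⟩ := hμ
  by_contra! h
  have hout : ∀ l ∉ s, μ l = 0 := fun l hl =>
    Finsupp.notMem_support_iff.1 fun h' => hl (hsupp h')
  refine hne (Finsupp.ext fun l => ?_)
  rcases eq_or_ne l a with rfl | hla
  · rw [Finsupp.single_eq_same, ← hsum, sum_eq_single l h (hout l)]
  · rw [Finsupp.single_eq_of_ne hla]
    by_cases hl : l ∈ s
    · exact h l hl hla
    · exact hout l hl

lemma Finset.unbotD_max_eq {α : Type*} [LinearOrder α] {s : Finset α} {a : α} (c : α)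
    (ha : a ∈ s) (h : ∀ b ∈ s, b ≤ a) : WithBot.unbotD c s.max = a := by
  rw [le_antisymm (Finset.max_le fun b hb => WithBot.coe_le_coe.2 (h b hb)) (Finset.le_max ha)]
  rfl

section LeadingMonomial

variable {σ R : Type*} [LinearOrder σ] [CommSemiring R]

lemma coeff_monomial_add_of_lt {τ : σ →₀ ℕ} (c : R) {g : MvPolynomial σ R}
    (hg : ∀ d ∈ g.support, toLex d < toLex τ) : coeff τ (monomial τ c + g) = c := by
  rw [coeff_add, coeff_monomial, if_pos rfl,
    notMem_support_iff.1 fun h => (hg τ h).false, add_zero]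

lemma monomial_add_ne_zero_of_lt {τ : σ →₀ ℕ} {c : R} (hc : c ≠ 0) {g : MvPolynomial σ R}
    (hg : ∀ d ∈ g.support, toLex d < toLex τ) : monomial τ c + g ≠ 0 := fun h =>
  hc (by rw [← coeff_monomial_add_of_lt c hg, h, coeff_zero])

lemma leadM_monomial_add {τ : σ →₀ ℕ} {c : R} (hc : c ≠ 0) {g : MvPolynomial σ R}
    (hg : ∀ d ∈ g.support, toLex d < toLex τ) : leadM (monomial τ c + g) = toLex τ := by
  have hτ : τ ∈ (monomial τ c + g).support := by
    rw [mem_support_iff, coeff_monomial_add_of_lt c hg]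
    exact hc
  have hle : ∀ d ∈ (monomial τ c + g).support, toLex d ≤ toLex τ := fun d hd =>
    (mem_union.1 (support_add hd)).elim
      (fun h => (congrArg toLex (mem_singleton.1 (support_monomial_subset h))).le)
      fun h => (hg d h).le
  unfold leadM
  apply Finset.unbotD_max_eq
  -- `simp`, not `mem_image_of_mem`: the image in `leadM` uses a classical `DecidableEq` instance.
  · simp only [mem_image]
    exact ⟨τ, hτ, rfl⟩
  · simp only [mem_image]
    rintro _ ⟨d, hd, rfl⟩
    exact hle d hd

end LeadingMonomial

section Rows

variable {n m : ℕ}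

def rowEmb (l : Fin n) : Fin m ↪ Lex (Fin n × Fin m) :=
  ⟨fun j => toLex (l, j), fun _ _ h => by simpa using h⟩

noncomputable def rowExp (l : Fin n) : (Fin m →₀ ℕ) →+ (Lex (Fin n × Fin m) →₀ ℕ) :=
  Finsupp.embDomain.addMonoidHom (rowEmb l)

def permRows (e : Equiv.Perm (Fin n)) (p : Lex (Fin n × Fin m)) : Lex (Fin n × Fin m) :=
  toLex (e (ofLex p).1, (ofLex p).2)

lemma rowExp_apply (l l' : Fin n) (j : Fin m) (ν : Fin m →₀ ℕ) :
    rowExp l ν (toLex (l', j)) = if l' = l then ν j else 0 := by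
  split_ifs with h
  · subst h
    exact Finsupp.embDomain_apply_self (rowEmb l') ν j
  · refine Finsupp.embDomain_of_notMem_range _ _ _ ?_
    rintro ⟨j', hj'⟩
    exact h (congrArg (fun p => (ofLex p).1) hj').symm

lemma rowExp_injective (l : Fin n) : Function.Injective (rowExp (m := m) l) :=
  Finsupp.embDomain_injective (rowEmb l)

lemma rowExp_single (l : Fin n) (j : Fin m) (c : ℕ) :
    rowExp l (Finsupp.single j c) = Finsupp.single (toLex (l, j)) c :=
  Finsupp.embDomain_single _ _ _

lemma monomial_rowExp {R : Type*} [CommSemiring R] (l : Fin n) (ν : Fin m →₀ ℕ) :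
    monomial (rowExp l ν) (1 : R) = ∏ j, X (toLex (l, j)) ^ ν j := by
  rw [monomial_eq, C_1, one_mul, rowExp, Finsupp.embDomain.addMonoidHom_apply,
    Finsupp.prod_embDomain]
  exact Finsupp.prod_fintype _ _ fun _ => pow_zero _

lemma mapDomain_permRows_rowExp (e : Equiv.Perm (Fin n)) (l : Fin n) (ν : Fin m →₀ ℕ) :
    Finsupp.mapDomain (permRows e) (rowExp l ν) = rowExp (e l) ν := by
  simp only [rowExp, Finsupp.embDomain.addMonoidHom_apply, Finsupp.embDomain_eq_mapDomain,
    ← Finsupp.mapDomain_comp]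
  rfl

lemma toLex_rowExp_lt {i l : Fin n} (hil : i < l) {ν : Fin m →₀ ℕ} (hν : ν ≠ 0) :
    toLex (rowExp l ν) < toLex (rowExp i ν) := by
  have hsupp : ν.support.Nonempty := Finsupp.support_nonempty_iff.2 hν
  set j₀ := ν.support.min' hsupp
  refine Finsupp.Lex.lt_iff.2 ⟨toLex (i, j₀), fun q hq => ?_, ?_⟩
  · obtain ⟨⟨l', j'⟩, rfl⟩ : ∃ p, toLex p = q := ⟨ofLex q, rfl⟩
    change rowExp l ν (toLex (l', j')) = rowExp i ν (toLex (l', j'))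
    have hq' : l' < i ∨ l' = i ∧ j' < j₀ := Prod.Lex.toLex_lt_toLex.1 hq
    have hl' : l' ≠ l := by rintro rfl; rcases hq' with h | ⟨h, -⟩ <;> order
    rw [rowExp_apply, rowExp_apply, if_neg hl']
    rcases hq' with h | ⟨rfl, hj'⟩
    · rw [if_neg h.ne]
    · rw [if_pos rfl, eq_comm, ← Finsupp.notMem_support_iff]
      exact fun hmem => (ν.support.min'_le _ hmem).not_gt hj'
  · change rowExp l ν (toLex (i, j₀)) < rowExp i ν (toLex (i, j₀))
    rw [rowExp_apply, rowExp_apply, if_neg hil.ne, if_pos rfl]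
    exact Nat.pos_of_ne_zero (Finsupp.mem_support_iff.1 (ν.support.min'_mem hsupp))

lemma toLex_rowExp_le {i l : Fin n} (hil : i ≤ l) (ν : Fin m →₀ ℕ) :
    toLex (rowExp l ν) ≤ toLex (rowExp i ν) := by
  rcases hil.lt_or_eq with hil | rfl
  · rcases eq_or_ne ν 0 with rfl | hν
    · simp
    · exact (toLex_rowExp_lt hil hν).le
  · exact le_rfl

lemma toLex_sum_rowExp_lt {S : Finset (Fin n)} {i : Fin n} (hS : ∀ l ∈ S, i ≤ l)
    {μ : Fin n → Fin m →₀ ℕ} (h : ∃ l ∈ S, l ≠ i ∧ μ l ≠ 0) :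
    toLex (∑ l ∈ S, rowExp l (μ l)) < toLex (rowExp i (∑ l ∈ S, μ l)) := by
  obtain ⟨l, hl, hli, hμ⟩ := h
  rw [map_sum (rowExp i), toLex_sum, toLex_sum]
  exact sum_lt_sum (fun l hl => toLex_rowExp_le (hS l hl) _)
    ⟨l, hl, toLex_rowExp_lt ((hS l hl).lt_of_ne' hli) hμ⟩

end Rows

section Series

variable (R : Type*) [CommRing R] {n : ℕ} (m : ℕ)

/-- `∑ⱼ tⱼ x_l^{(j)}`, the auxiliary variables `tⱼ` being indexed by `Fin m`. -/
noncomputable def rowLinearForm (l : Fin n) :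
    MvPolynomial (Fin m) (MvPolynomial (Lex (Fin n × Fin m)) R) :=
  ∑ j, monomial (Finsupp.single j 1) (X (toLex (l, j)))

/-- The inverse of `1 - rowLinearForm R m l`, given by its coefficients. -/
noncomputable def rowGeomSeries (l : Fin n) :
    MvPowerSeries (Fin m) (MvPolynomial (Lex (Fin n × Fin m)) R) :=
  fun ν => monomial (rowExp l ν) (multinomial univ ν : R)

variable {R m}

lemma coeff_rowGeomSeries (l : Fin n) (ν : Fin m →₀ ℕ) :
    MvPowerSeries.coeff ν (rowGeomSeries R m l) =
      monomial (rowExp l ν) (multinomial univ ν : R) :=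
  rfl

lemma coeff_rowLinearForm_mul (l : Fin n) (ν : Fin m →₀ ℕ)
    (f : MvPowerSeries (Fin m) (MvPolynomial (Lex (Fin n × Fin m)) R)) :
    MvPowerSeries.coeff ν ((rowLinearForm R m l : MvPowerSeries _ _) * f) =
      ∑ j ∈ ν.support, X (toLex (l, j)) * MvPowerSeries.coeff (ν - Finsupp.single j 1) f := by
  rw [← coeToMvPowerSeries.ringHom_apply, rowLinearForm, map_sum, sum_mul, map_sum]
  simp only [coeToMvPowerSeries.ringHom_apply, coe_monomial, MvPowerSeries.coeff_monomial_mul,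
    Finsupp.single_le_iff, Nat.one_le_iff_ne_zero, ← Finsupp.mem_support_iff]
  rw [sum_ite_mem, univ_inter]

lemma one_sub_rowLinearForm_mul_rowGeomSeries (l : Fin n) :
    (1 - (rowLinearForm R m l : MvPowerSeries _ _)) * rowGeomSeries R m l = 1 := by
  refine MvPowerSeries.ext fun ν => ?_
  rw [sub_mul, one_mul, map_sub, coeff_rowLinearForm_mul, MvPowerSeries.coeff_one,
    coeff_rowGeomSeries]
  rcases eq_or_ne ν 0 with rfl | hν
  · simp [Nat.multinomial]
  have hterm : ∀ j ∈ ν.support, X (toLex (l, j)) *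
      MvPowerSeries.coeff (ν - Finsupp.single j 1) (rowGeomSeries R m l) =
        monomial (rowExp l ν) (multinomial univ ⇑(ν - Finsupp.single j 1 : Fin m →₀ ℕ) : R) := by
    intro j hj
    rw [coeff_rowGeomSeries, X, monomial_mul, one_mul, ← rowExp_single, ← map_add,
      add_tsub_cancel_of_le (Finsupp.single_le_iff.2 (Nat.one_le_iff_ne_zero.2
        (Finsupp.mem_support_iff.1 hj)))]
  rw [sum_congr rfl hterm, ← map_sum, ← Nat.cast_sum,
    ← multinomial_eq_sum_multinomial_tsub_single hν, sub_self, if_neg hν]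

lemma map_rename_rowGeomSeries (e : Equiv.Perm (Fin n)) (l : Fin n) :
    MvPowerSeries.map (rename (permRows e) : MvPolynomial (Lex (Fin n × Fin m)) R →ₐ[R] _)
      (rowGeomSeries R m l) = rowGeomSeries R m (e l) := by
  refine MvPowerSeries.ext fun ν => ?_
  rw [MvPowerSeries.coeff_map, coeff_rowGeomSeries, coeff_rowGeomSeries, RingHom.coe_coe,
    rename_monomial, mapDomain_permRows_rowExp]

lemma map_constantCoeff_rowGeomSeries (l : Fin n) :
    MvPowerSeries.map constantCoeff (rowGeomSeries R m l) = 1 := by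
  refine MvPowerSeries.ext fun ν => ?_
  rw [MvPowerSeries.coeff_map, coeff_rowGeomSeries, constantCoeff_monomial,
    MvPowerSeries.coeff_one]
  simp only [map_eq_zero_iff _ (rowExp_injective l)]
  split_ifs with hν
  · simp [hν, Nat.multinomial]
  · rfl

variable (R n m)

/-- Its coefficients are the polarized complete homogeneous symmetric polynomials. -/
noncomputable def completeSymmSeries :
    MvPowerSeries (Fin m) (MvPolynomial (Lex (Fin n × Fin m)) R) :=
  ∏ l : Fin n, rowGeomSeries R m l

variable {R n m}

lemma rename_coeff_completeSymmSeries (e : Equiv.Perm (Fin n)) (ν : Fin m →₀ ℕ) :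
    rename (permRows e) (MvPowerSeries.coeff ν (completeSymmSeries R n m)) =
      MvPowerSeries.coeff ν (completeSymmSeries R n m) := by
  have hmap : MvPowerSeries.map
      (rename (permRows e) : MvPolynomial (Lex (Fin n × Fin m)) R →ₐ[R] _)
      (completeSymmSeries R n m) = completeSymmSeries R n m := by
    simp only [completeSymmSeries, map_prod, map_rename_rowGeomSeries]
    exact Equiv.prod_comp e (rowGeomSeries R m)
  simpa using congrArg (MvPowerSeries.coeff ν) hmap

lemma constantCoeff_coeff_completeSymmSeries {ν : Fin m →₀ ℕ} (hν : ν ≠ 0) :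
    constantCoeff (MvPowerSeries.coeff ν (completeSymmSeries R n m)) = 0 := by
  have hmap : MvPowerSeries.map constantCoeff (completeSymmSeries R n m) = 1 := by
    simp only [completeSymmSeries, map_prod, map_constantCoeff_rowGeomSeries, prod_const_one]
  simpa [MvPowerSeries.coeff_one, hν] using congrArg (MvPowerSeries.coeff ν) hmap

variable (R m) in
noncomputable def headPoly (i : Fin n) :
    MvPolynomial (Fin m) (MvPolynomial (Lex (Fin n × Fin m)) R) :=
  ∏ l ∈ Iio i, (1 - rowLinearForm R m l)

variable (R m) in
noncomputable def tailSeries (i : Fin n) :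
    MvPowerSeries (Fin m) (MvPolynomial (Lex (Fin n × Fin m)) R) :=
  ∏ l ∈ Ici i, rowGeomSeries R m l

lemma headPoly_mul_completeSymmSeries (i : Fin n) :
    (headPoly R m i : MvPowerSeries _ _) * completeSymmSeries R n m = tailSeries R m i := by
  have hsplit : completeSymmSeries R n m =
      (∏ l ∈ Iio i, rowGeomSeries R m l) * tailSeries R m i := by
    rw [completeSymmSeries, tailSeries, ← prod_union (disjoint_left.2 fun l hl hl' =>
      (mem_Iio.1 hl).not_ge (mem_Ici.1 hl'))]
    exact (prod_subset (subset_univ _) fun l _ hl =>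
      absurd (mem_union.2 ((lt_or_ge l i).imp mem_Iio.2 mem_Ici.2)) hl).symm
  rw [hsplit, ← coeToMvPowerSeries.ringHom_apply, headPoly, map_prod, ← mul_assoc,
    ← prod_mul_distrib]
  simp only [map_sub, map_one, coeToMvPowerSeries.ringHom_apply,
    one_sub_rowLinearForm_mul_rowGeomSeries, prod_const_one, one_mul]

lemma totalDegree_rowLinearForm_le (l : Fin n) : (rowLinearForm R m l).totalDegree ≤ 1 :=
  (totalDegree_finsetSum _ _).trans <| Finset.sup_le fun j _ =>
    (totalDegree_monomial_le _ _).trans (by simp)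

lemma totalDegree_headPoly_le (i : Fin n) : (headPoly R m i).totalDegree ≤ i :=
  calc (headPoly R m i).totalDegree
      ≤ ∑ l ∈ Iio i, (1 - rowLinearForm R m l).totalDegree := totalDegree_finsetProd _ _
    _ ≤ ∑ _l ∈ Iio i, 1 := sum_le_sum fun l _ =>
        (totalDegree_sub _ _).trans (max_le (by simp) (totalDegree_rowLinearForm_le l))
    _ = i := by simp

variable (R m) in
noncomputable def hilbertIdeal (G : Subgroup (Equiv.Perm (Fin n))) :
    Ideal (MvPolynomial (Lex (Fin n × Fin m)) R) :=
  Ideal.span {h | (∀ g ∈ G, rename (permRows g⁻¹) h = h) ∧ constantCoeff h = 0}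

lemma coeff_tailSeries_mem_hilbertIdeal (G : Subgroup (Equiv.Perm (Fin n))) {i : Fin n}
    {κ : Fin m →₀ ℕ} (hκ : (i : ℕ) < κ.degree) :
    MvPowerSeries.coeff κ (tailSeries R m i) ∈ hilbertIdeal R m G := by
  rw [← headPoly_mul_completeSymmSeries, MvPowerSeries.coeff_mul]
  refine Ideal.sum_mem _ fun ⟨a, b⟩ hab => ?_
  rcases eq_or_ne b 0 with rfl | hb
  · rw [HasAntidiagonal.mem_antidiagonal, add_zero] at hab
    subst hab
    rw [coeff_coe, coeff_eq_zero_of_totalDegree_lt ((totalDegree_headPoly_le i).trans_lt hκ),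
      zero_mul]
    exact zero_mem _
  · exact Ideal.mul_mem_left _ _ (Ideal.subset_span
      ⟨fun g _ => rename_coeff_completeSymmSeries g⁻¹ b,
        constantCoeff_coeff_completeSymmSeries hb⟩)

lemma coeff_tailSeries (i : Fin n) (κ : Fin m →₀ ℕ) :
    MvPowerSeries.coeff κ (tailSeries R m i) =
      ∑ μ ∈ (Ici i).finsuppAntidiag κ,
        monomial (∑ l ∈ Ici i, rowExp l (μ l)) (∏ l ∈ Ici i, multinomial univ (μ l) : R) := by
  rw [tailSeries, MvPowerSeries.coeff_prod]
  refine sum_congr rfl fun μ _ => ?_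
  simp only [coeff_rowGeomSeries, monomial_sum_prod]

lemma coeff_tailSeries_eq_monomial_add (i : Fin n) (κ : Fin m →₀ ℕ) :
    ∃ g, MvPowerSeries.coeff κ (tailSeries R m i) =
        monomial (rowExp i κ) (multinomial univ κ : R) + g ∧
      ∀ d ∈ g.support, toLex d < toLex (rowExp i κ) := by
  have hi : i ∈ Ici i := mem_Ici.2 le_rfl
  have hmem : Finsupp.single i κ ∈ (Ici i).finsuppAntidiag κ := by
    rw [mem_finsuppAntidiag, sum_eq_single_of_mem i hi fun l _ hl => Finsupp.single_eq_of_ne hl,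
      Finsupp.single_eq_same]
    exact ⟨rfl, Finsupp.support_single_subset.trans (singleton_subset_iff.2 hi)⟩
  have hhead : monomial (∑ l ∈ Ici i, rowExp l (Finsupp.single i κ l))
      (∏ l ∈ Ici i, multinomial univ (Finsupp.single i κ l) : R) =
        monomial (rowExp i κ) (multinomial univ κ : R) := by
    rw [sum_eq_single_of_mem i hi fun l _ hl => by rw [Finsupp.single_eq_of_ne hl, map_zero],
      prod_eq_single_of_mem i hi fun l _ hl => by
        simp [Finsupp.single_eq_of_ne hl, Nat.multinomial],
      Finsupp.single_eq_same]
  refine ⟨_, by rw [coeff_tailSeries, ← add_sum_erase _ _ hmem, hhead], fun d hd => ?_⟩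
  obtain ⟨μ, hμ, hdμ⟩ := mem_biUnion.1 (support_sum hd)
  obtain ⟨hne, hμ⟩ := mem_erase.1 hμ
  rw [mem_singleton.1 (support_monomial_subset hdμ), ← (mem_finsuppAntidiag.1 hμ).1]
  exact toLex_sum_rowExp_lt (fun l hl => mem_Ici.1 hl)
    (exists_ne_and_ne_zero_of_mem_finsuppAntidiag hμ hne)

end Series

end

/-- for a permutation group `G ≤ Sₙ` acting naturally on `V = kⁿ` and
diagonally on `Vᵐ`, with `char k = 0` or `char k > n`, the lead term ideal of the Hilbert
ideal `I(G,Vᵐ)` — with respect to the lex order with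
`x₁^{(1)} > x₁^{(2)} > ⋯ > x₁^{(m)} > x₂^{(1)} > ⋯ > xₙ^{(m)}` — contains every monomial
`∏_j (x_i^{(j)})^{κ_j}` with `κ₁ + ⋯ + κ_m = i` (here `i : Fin n` encodes the `1`-based
index `i+1`). -/
theorem monomials_mem_leadIdeal_hilbert (k : Type) [Field k] (n m : ℕ)
    (hchar : ringChar k = 0 ∨ n < ringChar k)
    (G : Subgroup (Equiv.Perm (Fin n)))
    (i : Fin n) (κ : Fin m → ℕ) (hκ : ∑ j : Fin m, κ j = (i : ℕ) + 1) :
    (∏ j : Fin m, X (toLex ((i, j) : Fin n × Fin m)) ^ κ j :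
        MvPolynomial (Lex (Fin n × Fin m)) k) ∈
      leadIdeal (Ideal.span {h : MvPolynomial (Lex (Fin n × Fin m)) k |
        (∀ g ∈ G, rename
          (fun p : Lex (Fin n × Fin m) => toLex (g⁻¹ (ofLex p).1, (ofLex p).2)) h = h) ∧
        constantCoeff h = 0}) := by
  set κ' : Fin m →₀ ℕ := Finsupp.equivFunOnFinite.symm κ
  have hdeg : κ'.degree = i + 1 := (Finsupp.degree_eq_sum κ').trans hκ
  have hmult : (Nat.multinomial Finset.univ κ' : k) ≠ 0 :=
    Nat.cast_multinomial_ne_zero _ _ (hchar.imp_right fun h => by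
      rw [← Finsupp.degree_eq_sum, hdeg]; omega)
  obtain ⟨g, hf, hg⟩ := coeff_tailSeries_eq_monomial_add (R := k) i κ'
  rw [show (∏ j, X (toLex (i, j)) ^ κ j : MvPolynomial _ k) = monomial (rowExp i κ') 1 from
    (monomial_rowExp i κ').symm]
  change _ ∈ leadIdeal (hilbertIdeal k m G)
  refine Ideal.subset_span ⟨_, coeff_tailSeries_mem_hilbertIdeal G (i := i) (κ := κ')
    (by omega), hf ▸ monomial_add_ne_zero_of_lt hmult hg, ?_⟩
  rw [hf, leadM_monomial_add hmult hg, ofLex_toLex]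
end

section
/- Let G be a finite group acting linearly on finite-dimensional k-vector spaces, acting diagonally on V^m, and let f ∈ I(G,V) be an element of the Hilbert ideal. Then every polarization Pol_k(f), for k ∈ ℕ^m, lies in the Hilbert ideal I(G,V^m). -/
open MvPolynomial

/-- The action of `g ∈ G` (acting on `V = kⁿ` through a representation
`ρ : G →* GLₙ(k)`) on `k[V] = k[x₁,…,xₙ]`: `(g·f)(v) = f(g⁻¹ v)`, i.e.
`x_i ↦ Σ_l (ρ(g⁻¹))_{i l} x_l`. -/
noncomputable def actV {k : Type*} [CommRing k] {n : ℕ} {G : Type*} [Group G]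
    (ρ : G →* Matrix.GeneralLinearGroup (Fin n) k) (g : G)
    (f : MvPolynomial (Fin n) k) : MvPolynomial (Fin n) k :=
  MvPolynomial.aeval
    (fun i => ∑ l : Fin n, MvPolynomial.C ((ρ g⁻¹ : Matrix (Fin n) (Fin n) k) i l) *
      MvPolynomial.X l) f

/-- The diagonal action of `g ∈ G` on `k[Vᵐ] = k[x_i^{(j)}]`:
`x_i^{(j)} ↦ Σ_l (ρ(g⁻¹))_{i l} x_l^{(j)}`. -/
noncomputable def actVm {k : Type*} [CommRing k] {n m : ℕ} {G : Type*} [Group G]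
    (ρ : G →* Matrix.GeneralLinearGroup (Fin n) k) (g : G)
    (f : MvPolynomial (Fin n × Fin m) k) : MvPolynomial (Fin n × Fin m) k :=
  MvPolynomial.aeval
    (fun p : Fin n × Fin m =>
      ∑ l : Fin n, MvPolynomial.C ((ρ g⁻¹ : Matrix (Fin n) (Fin n) k) p.1 l) *
        MvPolynomial.X ((l, p.2) : Fin n × Fin m)) f

/-!
The polarization map `Φ` is `G`-equivariant, `G` acting on `k[Vᵐ][t₁,…,t_m]` through the
coefficients, and it commutes with taking constant terms. Hence for an invariant `h` with
zero constant term every coefficient of `Φ(h)` is an invariant with zero constant term, so `Φ`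
maps `I(G,V)` into the extension of `I(G,Vᵐ)` to `k[Vᵐ][t]`, which consists exactly of the
polynomials all of whose coefficients lie in `I(G,Vᵐ)`.
-/

namespace Polarization

variable {k : Type*} [CommRing k] {n m : ℕ} {G : Type*} [Group G]

noncomputable def polarize (k : Type*) [CommRing k] (n m : ℕ) :
    MvPolynomial (Fin n) k →ₐ[k] MvPolynomial (Fin m) (MvPolynomial (Fin n × Fin m) k) :=
  aeval fun i => ∑ j, C (X (i, j)) * X j

theorem pol_eq_coeff_polarize (f : MvPolynomial (Fin n) k) (κ : Fin m → ℕ) :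
    Pol (fun i j => (i, j)) f κ = coeff (Finsupp.equivFunOnFinite.symm κ) (polarize k n m f) :=
  rfl

noncomputable def diagAction (ρ : G →* Matrix.GeneralLinearGroup (Fin n) k) (m : ℕ) (g : G) :
    MvPolynomial (Fin n × Fin m) k →ₐ[k] MvPolynomial (Fin n × Fin m) k :=
  aeval fun p => ∑ l, C ((ρ g⁻¹ : Matrix (Fin n) (Fin n) k) p.1 l) * X (l, p.2)

theorem polarize_actV (ρ : G →* Matrix.GeneralLinearGroup (Fin n) k) (g : G)
    (f : MvPolynomial (Fin n) k) :
    polarize k n m (actV ρ g f) = mapAlgHom (diagAction ρ m g) (polarize k n m f) := by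
  simp only [actV, polarize, comp_aeval_apply]
  congr 2
  funext i
  simp only [map_inv, Matrix.coe_units_inv, map_sum, map_mul, algHom_C,
    MvPolynomial.algebraMap_apply, algebraMap_eq, aeval_X, Finset.mul_sum, mul_left_comm,
    diagAction, aeval_eq_bind₁, mapAlgHom_apply, map_C, RingHom.coe_coe, bind₁_X_right,
    map_X, Finset.sum_mul, mul_assoc]
  exact Finset.sum_comm

theorem map_constantCoeff_polarize (f : MvPolynomial (Fin n) k) :
    map constantCoeff (polarize k n m f) = C (constantCoeff f) := by
  induction f using MvPolynomial.induction_on with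
  | C a => simp [polarize]
  | add p q hp hq => simp [hp, hq]
  | mul_X p i _ => simp [polarize]

noncomputable def hilbertIdealV (ρ : G →* Matrix.GeneralLinearGroup (Fin n) k) :
    Ideal (MvPolynomial (Fin n) k) :=
  Ideal.span {h | (∀ g, actV ρ g h = h) ∧ constantCoeff h = 0}

noncomputable def hilbertIdealVm (ρ : G →* Matrix.GeneralLinearGroup (Fin n) k) (m : ℕ) :
    Ideal (MvPolynomial (Fin n × Fin m) k) :=
  Ideal.span {h | (∀ g, actVm ρ g h = h) ∧ constantCoeff h = 0}

theorem coeff_polarize_mem_hilbertIdealVm {ρ : G →* Matrix.GeneralLinearGroup (Fin n) k}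
    {f : MvPolynomial (Fin n) k} (hinv : ∀ g, actV ρ g f = f) (h0 : constantCoeff f = 0)
    (d : Fin m →₀ ℕ) : coeff d (polarize k n m f) ∈ hilbertIdealVm ρ m := by
  refine Ideal.subset_span ⟨fun g => ?_, ?_⟩
  · have h := congrArg (coeff d) (polarize_actV (m := m) ρ g f)
    rw [hinv, mapAlgHom_apply, coeff_map] at h
    exact h.symm
  · rw [← coeff_map, map_constantCoeff_polarize, h0, C_0, coeff_zero]

theorem hilbertIdealV_le_comap_polarize (ρ : G →* Matrix.GeneralLinearGroup (Fin n) k) :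
    hilbertIdealV ρ ≤ (Ideal.map C (hilbertIdealVm ρ m)).comap (polarize k n m) :=
  Ideal.span_le.mpr fun _ ⟨hinv, h0⟩ =>
    mem_map_C_iff.mpr (coeff_polarize_mem_hilbertIdealVm hinv h0)

end Polarization

open Polarization in
theorem pol_mem_hilbert_ideal_general (k : Type) [Field k] (n m : ℕ)
    (G : Type) [Group G] (ρ : G →* Matrix.GeneralLinearGroup (Fin n) k)
    (f : MvPolynomial (Fin n) k)
    (hf : f ∈ Ideal.span {h : MvPolynomial (Fin n) k |
      (∀ g : G, actV ρ g h = h) ∧ constantCoeff h = 0})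
    (κ : Fin m → ℕ) :
    Pol (fun i j => (i, j) : Fin n → Fin m → Fin n × Fin m) f κ ∈
      Ideal.span {h : MvPolynomial (Fin n × Fin m) k |
        (∀ g : G, actVm ρ g h = h) ∧ constantCoeff h = 0} := by
  rw [pol_eq_coeff_polarize]
  exact mem_map_C_iff.mp (hilbertIdealV_le_comap_polarize ρ hf) _

/-- for a finite group `G` acting linearly on `V = kⁿ` and diagonally on
`Vᵐ`, every polarization `Pol_κ(f)` of an element `f` of the Hilbert ideal `I(G,V)` lies
in the Hilbert ideal `I(G,Vᵐ)` (the Hilbert ideal is the ideal generated by the invariants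
with zero constant term). -/
theorem pol_mem_hilbert_ideal (k : Type) [Field k] (n m : ℕ)
    (G : Type) [Group G] [Finite G] (ρ : G →* Matrix.GeneralLinearGroup (Fin n) k)
    (f : MvPolynomial (Fin n) k)
    (hf : f ∈ Ideal.span {h : MvPolynomial (Fin n) k |
      (∀ g : G, actV ρ g h = h) ∧ constantCoeff h = 0})
    (κ : Fin m → ℕ) :
    Pol (fun i j => (i, j) : Fin n → Fin m → Fin n × Fin m) f κ ∈
      Ideal.span {h : MvPolynomial (Fin n × Fin m) k |
        (∀ g : G, actVm ρ g h = h) ∧ constantCoeff h = 0} :=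
  pol_mem_hilbert_ideal_general k n m G ρ f hf κ
end

section
/- Assume char(k) = 0. Let M = x_1^{a_1}⋯x_n^{a_n} be a monomial in k[x_1,…,x_n] and k = (k_1,…,k_m) ∈ ℕ^m with Pol_k(M) ≠ 0. Write the leading monomial of Pol_k(M) (lexicographic order with x_1^{(1)} > x_1^{(2)} > … > x_1^{(m)} > x_2^{(1)} > … > x_n^{(m)}) as h = ∏_{1≤i≤n, 1≤j≤m} (x_i^{(j)})^{b_{i,j}}. Then the exponents satisfy the recursion b_{i,j} = min{ k_j − Σ_{l=1}^{i−1} b_{l,j}, a_i − Σ_{l=1}^{j−1} b_{i,l} } for all 1 ≤ i ≤ n and 1 ≤ j ≤ m. -/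
/-!
Expanding `∏ᵢ (Σⱼ xᵢ⁽ʲ⁾ tⱼ)^{aᵢ}` by the multinomial theorem, the coefficient of
`∏ (xᵢ⁽ʲ⁾)^{dᵢⱼ}` in `Pol_κ(x^a)` is `∏ᵢ multinomial(dᵢ₁, …, dᵢₘ)` when the matrix `d` has row
sums `a` and column sums `κ`, and `0` otherwise. In characteristic zero the leading monomial is
therefore the lexicographically largest matrix `b` with these margins. If some `b_{ij}` were
below the bound `min(κⱼ - Σ_{l<i} b_{lj}, aᵢ - Σ_{l<j} b_{il})`, which it never exceeds, there
would be positive entries `b_{pj}` with `p > i` and `b_{iq}` with `q > j`; moving one unit from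
`(i, q)` and `(p, j)` to `(i, j)` and `(p, q)` keeps the margins and makes `b` lexicographically
larger.
-/

open MvPolynomial

open Finset

namespace Finset

variable {ι M : Type*} [LinearOrder ι] [Fintype ι] [LocallyFiniteOrderBot ι]
  [AddCommMonoid M] [PartialOrder M] [CanonicallyOrderedAdd M]

lemma sum_Iio_add_le_sum [IsOrderedAddMonoid M] (f : ι → M) (i : ι) :
    ∑ l ∈ Iio i, f l + f i ≤ ∑ l, f l := by
  rw [add_comm, ← sum_cons notMem_Iio_self, ← Iic_eq_cons_Iio]
  exact sum_le_univ_sum_of_nonneg fun _ => zero_le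

lemma exists_gt_pos_of_sum_Iio_add_lt {f : ι → M} {i : ι}
    (h : ∑ l ∈ Iio i, f l + f i < ∑ l, f l) : ∃ p, i < p ∧ 0 < f p := by
  by_contra! hf
  have hzero : ∀ l ∈ univ, l ∉ Iic i → f l = 0 := fun l _ hl => by
    simpa [pos_iff_ne_zero] using hf l (by simpa using hl)
  rw [add_comm, ← sum_cons notMem_Iio_self, ← Iic_eq_cons_Iio,
    sum_subset (subset_univ _) hzero] at h
  exact h.false

end Finset

section Margins

variable {ι ι' : Type*}

noncomputable def rowSums [Fintype ι'] : (Lex (ι × ι') →₀ ℕ) →+ ι → ℕ where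
  toFun d i := ∑ j, d (toLex (i, j))
  map_zero' := by ext; simp
  map_add' _ _ := by ext; simp [sum_add_distrib]

noncomputable def colSums [Fintype ι] : (Lex (ι × ι') →₀ ℕ) →+ ι' → ℕ where
  toFun d j := ∑ i, d (toLex (i, j))
  map_zero' := by ext; simp
  map_add' _ _ := by ext; simp [sum_add_distrib]

@[simp]
lemma rowSums_apply [Fintype ι'] (d : Lex (ι × ι') →₀ ℕ) (i : ι) :
    rowSums d i = ∑ j, d (toLex (i, j)) := rfl

@[simp]
lemma colSums_apply [Fintype ι] (d : Lex (ι × ι') →₀ ℕ) (j : ι') :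
    colSums d j = ∑ i, d (toLex (i, j)) := rfl

lemma rowSums_single [Fintype ι'] [DecidableEq ι] (i : ι) (j : ι') :
    rowSums (Finsupp.single (toLex (i, j)) 1) = Pi.single i 1 := by
  classical
  ext i'
  by_cases h : i = i' <;> simp [h, Finsupp.single_apply, eq_comm]

lemma colSums_single [Fintype ι] [DecidableEq ι'] (i : ι) (j : ι') :
    colSums (Finsupp.single (toLex (i, j)) 1) = Pi.single j 1 := by
  classical
  ext j'
  by_cases h : j = j' <;> simp [h, Finsupp.single_apply, eq_comm]

variable [Fintype ι] [Fintype ι'] [LinearOrder ι] [LinearOrder ι']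

lemma exists_margins_eq_toLex_gt {b : Lex (ι × ι') →₀ ℕ} {i p : ι} {j q : ι'}
    (hip : i < p) (hjq : j < q) (hiq : 0 < b (toLex (i, q))) (hpj : 0 < b (toLex (p, j))) :
    ∃ d, rowSums d = rowSums b ∧ colSums d = colSums b ∧ toLex b < toLex d := by
  set e : ι → ι' → Lex (ι × ι') →₀ ℕ := fun i j => Finsupp.single (toLex (i, j)) 1
  have hne : toLex (i, q) ≠ toLex (p, j) := by simp [hip.ne]
  obtain ⟨c, rfl⟩ : ∃ c, b = c + (e i q + e p j) := by
    refine ⟨b - (e i q + e p j), (tsub_add_cancel_of_le fun r => ?_).symm⟩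
    simp only [e, Finsupp.coe_add, Pi.add_apply, Finsupp.single_apply]
    split_ifs <;> subst_vars <;> simp_all [Nat.one_le_iff_ne_zero, pos_iff_ne_zero]
  refine ⟨c + (e i j + e p q), ?_, ?_, ?_⟩
  · simp only [e, map_add, rowSums_single]
  · simp only [e, map_add, colSums_single, add_comm (Pi.single j 1)]
  have hle : ∀ i' j', i ≤ i' → j ≤ j' → toLex (i, j) ≤ toLex (i', j') := fun i' j' hi hj =>
    Prod.Lex.toLex_le_toLex.2 (hi.lt_or_eq.imp id fun h => ⟨h, hj⟩)
  have hswap : toLex (e i q + e p j) < toLex (e i j + e p q) := by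
    refine Finsupp.Lex.lt_iff.2 ⟨toLex (i, j), fun r hr => ?_, ?_⟩
    · simp [e, (hr.trans_le (hle i q le_rfl hjq.le)).ne', (hr.trans_le (hle p j hip.le le_rfl)).ne',
        (hr.trans_le (hle p q hip.le hjq.le)).ne', hr.ne']
    · simp [e, hip.ne, hjq.ne]
  simpa only [toLex_add, add_lt_add_iff_left] using hswap

lemma eq_min_of_forall_margins_eq_toLex_le [LocallyFiniteOrderBot ι] [LocallyFiniteOrderBot ι']
    {b : Lex (ι × ι') →₀ ℕ}
    (hb : ∀ d, rowSums d = rowSums b → colSums d = colSums b → toLex d ≤ toLex b)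
    (i : ι) (j : ι') :
    b (toLex (i, j)) = min (colSums b j - ∑ l ∈ Iio i, b (toLex (l, j)))
      (rowSums b i - ∑ l ∈ Iio j, b (toLex (i, l))) := by
  have hcol : ∑ l ∈ Iio i, b (toLex (l, j)) + b (toLex (i, j)) ≤ colSums b j :=
    sum_Iio_add_le_sum _ i
  have hrow : ∑ l ∈ Iio j, b (toLex (i, l)) + b (toLex (i, j)) ≤ rowSums b i :=
    sum_Iio_add_le_sum _ j
  by_contra hne
  obtain ⟨p, hip, hpj⟩ := exists_gt_pos_of_sum_Iio_add_lt (f := fun l => b (toLex (l, j)))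
    (show ∑ l ∈ Iio i, b (toLex (l, j)) + b (toLex (i, j)) < colSums b j by omega)
  obtain ⟨q, hjq, hiq⟩ := exists_gt_pos_of_sum_Iio_add_lt (f := fun l => b (toLex (i, l)))
    (show ∑ l ∈ Iio j, b (toLex (i, l)) + b (toLex (i, j)) < rowSums b i by omega)
  obtain ⟨d, hrow, hcol, hlt⟩ := exists_margins_eq_toLex_gt hip hjq hiq hpj
  exact (hb d hrow hcol).not_gt hlt

end Margins

lemma isGreatest_leadM {k σ : Type*} [CommSemiring k] [LinearOrder σ] {f : MvPolynomial σ k}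
    (hf : f ≠ 0) : IsGreatest (toLex '' (f.support : Set (σ →₀ ℕ))) (leadM f) := by
  let : DecidableEq (Lex (σ →₀ ℕ)) := Classical.decEq _
  have hs : (f.support.image toLex).Nonempty := (support_nonempty.2 hf).image _
  convert isGreatest_max' _ hs using 1
  · simp
  · rw [leadM, ← coe_max' hs]
    rfl

lemma MvPolynomial.monomial_equivFunOnFinite_symm {R σ : Type*} [CommSemiring R] [Fintype σ]
    (g : σ → ℕ) (c : R) :
    monomial (Finsupp.equivFunOnFinite.symm g) c = C c * ∏ s, X s ^ g s := by
  rw [monomial_eq, Finsupp.prod_fintype _ _ fun _ => pow_zero _]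
  rfl

section Expansion

variable {ι ι' : Type*} [Fintype ι] [Fintype ι']

noncomputable def lexMatrixEquiv : (ι → ι' → ℕ) ≃ (Lex (ι × ι') →₀ ℕ) where
  toFun B := Finsupp.equivFunOnFinite.symm fun p => B (ofLex p).1 (ofLex p).2
  invFun d i j := d (toLex (i, j))
  left_inv B := by ext; simp
  right_inv d := by ext; simp

lemma lexMatrixEquiv_apply (B : ι → ι' → ℕ) :
    lexMatrixEquiv B = Finsupp.equivFunOnFinite.symm fun p => B (ofLex p).1 (ofLex p).2 := rfl

lemma lexMatrixEquiv_symm_apply (d : Lex (ι × ι') →₀ ℕ) :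
    lexMatrixEquiv.symm d = fun i j => d (toLex (i, j)) := rfl

variable {k : Type*} [CommSemiring k]

lemma prod_prod_C_X_mul_X_pow (B : ι → ι' → ℕ) :
    ∏ i, ∏ j, (C (X (toLex (i, j))) * X j : MvPolynomial ι' (MvPolynomial (Lex (ι × ι')) k)) ^ B i j
      = monomial (Finsupp.equivFunOnFinite.symm fun j => ∑ i, B i j)
          (monomial (lexMatrixEquiv B) 1) := by
  rw [monomial_equivFunOnFinite_symm, lexMatrixEquiv_apply, monomial_equivFunOnFinite_symm,
    map_one, one_mul]
  simp only [mul_pow, prod_mul_distrib, ← map_pow, ← map_prod, ← prod_pow_eq_pow_sum]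
  rw [prod_comm (s := univ (α := ι'))]
  congr 2
  exact (Fintype.prod_prod_type fun p : ι × ι' => (X (toLex p) : MvPolynomial _ k) ^ B p.1 p.2).symm

lemma aeval_monomial_eq_sum_piAntidiag [DecidableEq ι] [DecidableEq ι'] (a : ι →₀ ℕ) :
    aeval (fun i => ∑ j, C (X (toLex (i, j))) * X j :
        ι → MvPolynomial ι' (MvPolynomial (Lex (ι × ι')) k)) (monomial a (1 : k))
      = ∑ B ∈ Fintype.piFinset fun i => piAntidiag univ (a i),
          monomial (Finsupp.equivFunOnFinite.symm fun j => ∑ i, B i j)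
            (monomial (lexMatrixEquiv B) (∏ i, (Nat.multinomial univ (B i) : k))) := by
  rw [aeval_monomial, map_one, one_mul, Finsupp.prod_fintype _ _ fun _ => pow_zero _]
  simp_rw [sum_pow_eq_sum_piAntidiag]
  rw [prod_univ_sum]
  refine sum_congr rfl fun B _ => ?_
  rw [prod_mul_distrib, prod_prod_C_X_mul_X_pow, ← Nat.cast_prod, ← map_natCast C,
    C_mul_monomial, ← map_natCast C, C_mul_monomial, mul_one, Nat.cast_prod]

end Expansion

section Polarization

variable {k : Type*} [CommSemiring k] {n m : ℕ}

lemma coeff_pol_monomial (a : Fin n →₀ ℕ) (κ : Fin m → ℕ) (d : Lex (Fin n × Fin m) →₀ ℕ) :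
    coeff d (Pol (fun i j => toLex (i, j)) (monomial a (1 : k)) κ)
      = if rowSums d = ⇑a ∧ colSums d = κ
        then ∏ i, (Nat.multinomial univ fun j => d (toLex (i, j)) : k) else 0 := by
  simp only [Pol]
  rw [aeval_monomial_eq_sum_piAntidiag, coeff_sum, coeff_sum]
  simp only [coeff_monomial, apply_ite (coeff d), coeff_zero, ← Equiv.eq_symm_apply,
    Equiv.symm_symm, Equiv.apply_symm_apply, ← ite_and]
  simp only [and_comm (b := _ = lexMatrixEquiv.symm d), ite_and, sum_ite_eq']
  simp [mem_piAntidiag, funext_iff, lexMatrixEquiv_symm_apply]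

lemma mem_support_pol_monomial_iff [CharZero k] {a : Fin n →₀ ℕ} {κ : Fin m → ℕ}
    {d : Lex (Fin n × Fin m) →₀ ℕ} :
    d ∈ (Pol (fun i j => toLex (i, j)) (monomial a (1 : k)) κ).support
      ↔ rowSums d = ⇑a ∧ colSums d = κ := by
  rw [mem_support_iff, coeff_pol_monomial]
  split_ifs with h
  · refine iff_of_true ?_ h
    rw [← Nat.cast_prod, Nat.cast_ne_zero]
    exact (prod_pos fun _ _ => Nat.multinomial_pos _ _).ne'
  · exact iff_of_false (by simp) h

end Polarization

/-- `char k = 0`. Let `M = x₁^{a₁}⋯xₙ^{aₙ}` be a monomial of `k[x₁,…,xₙ]`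
and `κ ∈ ℕᵐ` with `Pol_κ(M) ≠ 0`. Writing the leading monomial of `Pol_κ(M)` (lex order
with `x₁^{(1)} > x₁^{(2)} > ⋯ > x₁^{(m)} > x₂^{(1)} > ⋯ > xₙ^{(m)}`) as
`∏_{i,j} (x_i^{(j)})^{b_{i,j}}`, the exponents satisfy the recursion
`b_{i,j} = min (κ_j − Σ_{l<i} b_{l,j}) (a_i − Σ_{l<j} b_{i,l})`
(the natural subtractions are exact). -/
theorem leadM_pol_exponent_recursion (k : Type) [Field k] [CharZero k] (n m : ℕ)
    (a : Fin n →₀ ℕ) (κ : Fin m → ℕ)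
    (hne : Pol (fun i j => toLex (i, j) : Fin n → Fin m → Lex (Fin n × Fin m))
      (monomial a (1 : k)) κ ≠ 0)
    (b : Lex (Fin n × Fin m) →₀ ℕ)
    (hb : b = ofLex (leadM (Pol (fun i j => toLex (i, j) : Fin n → Fin m → Lex (Fin n × Fin m))
      (monomial a (1 : k)) κ))) :
    ∀ (i : Fin n) (j : Fin m),
      b (toLex (i, j)) =
        min (κ j - ∑ l ∈ Finset.Iio i, b (toLex (l, j)))
          (a i - ∑ l ∈ Finset.Iio j, b (toLex (i, l))) := by
  obtain ⟨⟨d, hd, hlead⟩, hmax⟩ := isGreatest_leadM hne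
  rw [← hlead, ofLex_toLex] at hb
  subst hb
  obtain ⟨hrow, hcol⟩ := mem_support_pol_monomial_iff.1 hd
  have hb_max : ∀ d, rowSums d = rowSums b → colSums d = colSums b → toLex d ≤ toLex b :=
    fun d hr hc => hlead ▸ hmax ⟨d, mem_support_pol_monomial_iff.2 ⟨hr.trans hrow, hc.trans hcol⟩,
      rfl⟩
  intro i j
  rw [eq_min_of_forall_margins_eq_toLex_le hb_max, hrow, hcol]
end

section
/- Assume char(k) = 0. Let M = x_1^{a_1}⋯x_n^{a_n} be a monomial in k[x_1,…,x_n] and k = (k_1,…,k_m) ∈ ℕ^m with Pol_k(M) ≠ 0, and let h = ∏_{i,j} (x_i^{(j)})^{b_{i,j}} be the leading monomial of Pol_k(M) with respect to the lexicographic order with x_1^{(1)} > x_1^{(2)} > … > x_1^{(m)} > x_2^{(1)} > … > x_n^{(m)}. Then the coefficient of h in Pol_k(M) equals ∏_{i=1}^n a_i! / (b_{i,1}!⋯b_{i,m}!), which is a nonzero element of k. -/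
open MvPolynomial

/-!
By the multinomial theorem, `Pol_κ(x^a)` is the sum, over the `ℕ`-matrices `B` with row sums `a`
and column sums `κ`, of `∏ᵢ multinomial(Bᵢ) · ∏_{i,j} (x_i^{(j)})^{B i j}`. Distinct matrices give
distinct monomials, so every monomial of the support, in particular the leading one, has
coefficient `∏ᵢ aᵢ! / ∏ⱼ (B i j)!`, a positive integer.
-/

open Finset

lemma Finsupp.sum_equivFunOnFinite_symm {α M ι : Type*} [Finite α] [AddCommMonoid M]
    (s : Finset ι) (f : ι → α → M) :
    ∑ i ∈ s, Finsupp.equivFunOnFinite.symm (f i) =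
      Finsupp.equivFunOnFinite.symm (∑ i ∈ s, f i) :=
  (map_sum Finsupp.addEquivFunOnFinite.symm f s).symm

section Matrices

variable {σ : Type*} {n m : ℕ}

noncomputable def polMatrices (a : Fin n →₀ ℕ) (κ : Fin m → ℕ) : Finset (Fin n → Fin m → ℕ) :=
  {B ∈ Fintype.piFinset fun i => piAntidiag univ (a i) | ∑ i, B i = κ}

noncomputable def matrixMonomial (emb : Fin n → Fin m → σ) (B : Fin n → Fin m → ℕ) : σ →₀ ℕ :=
  ∑ i, ∑ j, Finsupp.single (emb i j) (B i j)

lemma multinomial_of_mem_polMatrices {a : Fin n →₀ ℕ} {κ : Fin m → ℕ}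
    {B : Fin n → Fin m → ℕ} (hB : B ∈ polMatrices a κ) (i : Fin n) :
    Nat.multinomial univ (B i) = (a i).factorial / ∏ j, (B i j).factorial := by
  rw [Nat.multinomial, (mem_piAntidiag.1 (Fintype.mem_piFinset.1 (mem_filter.1 hB).1 i)).1]

variable {emb : Fin n → Fin m → σ}

lemma matrixMonomial_apply (hemb : Function.Injective (Function.uncurry emb))
    (B : Fin n → Fin m → ℕ) (i : Fin n) (j : Fin m) :
    matrixMonomial emb B (emb i j) = B i j := by
  classical
  have hemb_iff : ∀ i' j', emb i' j' = emb i j ↔ i' = i ∧ j' = j := fun i' j' =>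
    ⟨fun h => Prod.ext_iff.mp (hemb (a₁ := (i', j')) (a₂ := (i, j)) h), by rintro ⟨rfl, rfl⟩; rfl⟩
  simp [matrixMonomial, Finsupp.single_apply, hemb_iff, ite_and]

lemma matrixMonomial_injective (hemb : Function.Injective (Function.uncurry emb)) :
    Function.Injective (matrixMonomial emb) :=
  fun B B' h => funext₂ fun i j => by
    rw [← matrixMonomial_apply hemb B, h, matrixMonomial_apply hemb]

end Matrices

section Expansion

variable {k σ : Type*} [CommSemiring k] {n m : ℕ}

lemma pow_sum_C_X_mul_X (e : Fin m → σ) (N : ℕ) :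
    (∑ j, C (X (e j)) * X j : MvPolynomial (Fin m) (MvPolynomial σ k)) ^ N =
      ∑ β ∈ piAntidiag univ N, monomial (Finsupp.equivFunOnFinite.symm β)
        (monomial (∑ j, Finsupp.single (e j) (β j)) (Nat.multinomial univ β : k)) := by
  rw [sum_pow_eq_sum_piAntidiag]
  refine sum_congr rfl fun β _ => ?_
  simp_rw [mul_pow, ← C_pow, C_mul_X_pow_eq_monomial, X_pow_eq_monomial]
  rw [← monomial_sum_prod, ← map_natCast C, C_mul_monomial, monomial_sum_index (R := k),
    ← map_natCast (C : k →+* MvPolynomial σ k), Finsupp.equivFunOnFinite_symm_eq_sum]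

lemma Pol_monomial_one (emb : Fin n → Fin m → σ) (a : Fin n →₀ ℕ) (κ : Fin m → ℕ) :
    Pol emb (monomial a (1 : k)) κ =
      ∑ B ∈ polMatrices a κ,
        monomial (matrixMonomial emb B) (∏ i, (Nat.multinomial univ (B i) : k)) := by
  rw [Pol, aeval_monomial, map_one, one_mul, Finsupp.prod_pow]
  simp_rw [pow_sum_C_X_mul_X, prod_univ_sum, ← monomial_sum_prod,
    Finsupp.sum_equivFunOnFinite_symm, coeff_sum, coeff_monomial, Equiv.apply_eq_iff_eq,
    polMatrices, sum_filter, matrixMonomial]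

lemma support_Pol_monomial_one_subset [DecidableEq σ] (emb : Fin n → Fin m → σ)
    (a : Fin n →₀ ℕ) (κ : Fin m → ℕ) :
    (Pol emb (monomial a (1 : k)) κ).support ⊆ (polMatrices a κ).image (matrixMonomial emb) := by
  rw [Pol_monomial_one]
  refine MvPolynomial.support_sum.trans fun d hd => ?_
  obtain ⟨B, hB, hd⟩ := mem_biUnion.1 hd
  exact mem_image.2 ⟨B, hB, (mem_singleton.1 (support_monomial_subset hd)).symm⟩

lemma coeff_matrixMonomial_Pol_monomial_one {emb : Fin n → Fin m → σ}
    (hemb : Function.Injective (Function.uncurry emb)) {a : Fin n →₀ ℕ} {κ : Fin m → ℕ}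
    {B : Fin n → Fin m → ℕ} (hB : B ∈ polMatrices a κ) :
    coeff (matrixMonomial emb B) (Pol emb (monomial a (1 : k)) κ) =
      ∏ i, (Nat.multinomial univ (B i) : k) := by
  classical
  rw [Pol_monomial_one, coeff_sum, sum_eq_single_of_mem B hB]
  · rw [coeff_monomial, if_pos rfl]
  · intro B' _ hne
    rw [coeff_monomial, if_neg ((matrixMonomial_injective hemb).ne hne)]

end Expansion

lemma ofLex_leadM_mem_support {k σ : Type*} [CommSemiring k] [LinearOrder σ]
    {f : MvPolynomial σ k} (hf : f ≠ 0) : ofLex (leadM f) ∈ f.support := by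
  -- the instance fixed inside `leadM`, so that `rw [leadM, hd]` matches syntactically
  let : DecidableEq (Lex (σ →₀ ℕ)) := Classical.decEq _
  obtain ⟨d, hd⟩ := max_of_nonempty ((support_nonempty.2 hf).image toLex)
  obtain ⟨d', hd', rfl⟩ := mem_image.1 (mem_of_max hd)
  rw [leadM, hd]
  exact hd'

/-- `char k = 0`. Let `M = x₁^{a₁}⋯xₙ^{aₙ}` be a monomial of `k[x₁,…,xₙ]`
and `κ ∈ ℕᵐ` with `Pol_κ(M) ≠ 0`, and let `h = ∏_{i,j} (x_i^{(j)})^{b_{i,j}}` be the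
leading monomial of `Pol_κ(M)` with respect to the lex order with
`x₁^{(1)} > x₁^{(2)} > ⋯ > x₁^{(m)} > x₂^{(1)} > ⋯ > xₙ^{(m)}`. Then the coefficient of
`h` in `Pol_κ(M)` equals `∏_i a_i! / (b_{i,1}!⋯b_{i,m}!)` (the natural divisions are
exact), and this is a nonzero element of `k`. -/
theorem leadM_pol_coeff_eq_multinomial (k : Type) [Field k] [CharZero k] (n m : ℕ)
    (a : Fin n →₀ ℕ) (κ : Fin m → ℕ)
    (hne : Pol (fun i j => toLex (i, j) : Fin n → Fin m → Lex (Fin n × Fin m))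
      (monomial a (1 : k)) κ ≠ 0)
    (b : Lex (Fin n × Fin m) →₀ ℕ)
    (hb : b = ofLex (leadM (Pol (fun i j => toLex (i, j) : Fin n → Fin m → Lex (Fin n × Fin m))
      (monomial a (1 : k)) κ))) :
    MvPolynomial.coeff b
        (Pol (fun i j => toLex (i, j) : Fin n → Fin m → Lex (Fin n × Fin m))
          (monomial a (1 : k)) κ) =
        ((∏ i : Fin n, (a i).factorial / ∏ j : Fin m, (b (toLex (i, j))).factorial : ℕ) : k) ∧
      ((∏ i : Fin n, (a i).factorial / ∏ j : Fin m, (b (toLex (i, j))).factorial : ℕ) : k) ≠ 0 := by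
  have hemb : Function.Injective (Function.uncurry fun (i : Fin n) (j : Fin m) => toLex (i, j)) :=
    fun _ _ h => toLex_inj.1 h
  obtain ⟨B, hB, rfl⟩ := mem_image.1
    (support_Pol_monomial_one_subset _ _ _ (hb ▸ ofLex_leadM_mem_support hne))
  have hfactorials : ∏ i : Fin n, (a i).factorial / ∏ j : Fin m,
      (matrixMonomial (fun i j => toLex (i, j)) B (toLex (i, j))).factorial =
        ∏ i, Nat.multinomial univ (B i) := by
    simp only [matrixMonomial_apply hemb, multinomial_of_mem_polMatrices hB]
  rw [hfactorials, coeff_matrixMonomial_Pol_monomial_one hemb hB, Nat.cast_prod]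
  exact ⟨rfl, prod_ne_zero_iff.2 fun i _ => Nat.cast_ne_zero.2 (Nat.multinomial_pos _ _).ne'⟩
end
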